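/- arXiv:1207.1557 — 4 statements merged into one kernel-verified Lean document; each statement's English description precedes it below -/
import Mathlib

section
/- Let (G,S) be a Coxeter system with word length function ℓ with respect to S. Fix a point c in the open fundamental chamber C of the Tits cone. For g ∈ G, the number of reflection hyperplanes Z in the family H = ∪_{g∈G, s∈S} g·Z_s that meet the closed segment [g·c, c] equals ℓ(g). -/
open scoped Real

/-- The Coxeter bilinear form on `V = ⊕_{s∈S} ℝ αs` (with `V = B → ℝ` and `αs = Pi.single s 1`):
`B(αs, αt) = -cos (π / m(s,t))`, interpreted as `-1` when `m(s,t) = ∞` (encoded by `0`)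
and `1` when `s = t`. -/
noncomputable def coxForm {B : Type*} [Fintype B] [DecidableEq B] (M : CoxeterMatrix B)
    (ξ η : B → ℝ) : ℝ :=
  ∑ s : B, ∑ t : B, ξ s * η t *
    (if s = t then 1 else if M s t = 0 then -1 else -Real.cos (π / (M s t : ℝ)))

/-!
Both numbers equal the size of the inversion set `N(g)` of positive roots `β` with `g⁻¹ β`
negative. The key input is root positivity: `w αᵢ` has all coordinates `≥ 0` when
`ℓ(w sᵢ) > ℓ(w)`, and all `≤ 0` otherwise. It is proved by induction on `ℓ(w)`, reducing to a
rank-two parabolic subgroup, where the roots are computed with Chebyshev polynomials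
(Humphreys, *Reflection groups and Coxeter groups*, 5.4).

Since `c` is positive on positive roots, the wall of a positive root `β` meets `[g c, c]` iff
`β ∈ N(g)`; distinct positive roots have distinct walls because roots have norm one for the
invariant form. Finally, `N(g) = {αᵢ} ⊔ sᵢ N(sᵢ g)` for a left descent `i` of `g`, so
`|N(g)| = ℓ(g)`.
-/

open Polynomial.Chebyshev

/-- `cos (π / m)`, read as `1` for `m = 0` (that is, `m = ∞`). -/
noncomputable def coxCos (m : ℕ) : ℝ := if m = 0 then 1 else Real.cos (π / m)

lemma coxCos_one : coxCos 1 = -1 := by simp [coxCos]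

/-- For `m = ∞` this is `U_n(1) = n + 1`; otherwise `U_n(cos θ) = sin ((n + 1) θ) / sin θ`
with `θ = π / m`, and `(n + 1) θ ≤ π`. -/
lemma U_eval_coxCos_nonneg {m : ℕ} (hm : m ≠ 1) {n : ℤ} (hn : -1 ≤ n)
    (hnm : m = 0 ∨ n + 1 ≤ m) : 0 ≤ (U ℝ n).eval (coxCos m) := by
  rcases eq_or_ne m 0 with rfl | hm0
  · rw [coxCos, if_pos rfl, U_eval_one]
    exact_mod_cast (by omega : 0 ≤ n + 1)
  have hm2 : (2 : ℝ) ≤ m := by exact_mod_cast (by omega : 2 ≤ m)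
  have hθ : 0 < π / m := by positivity
  have hsin : 0 < Real.sin (π / m) :=
    Real.sin_pos_of_pos_of_lt_pi hθ ((div_lt_self Real.pi_pos (by linarith)))
  have hnθ : 0 ≤ ((n : ℝ) + 1) * (π / m) := by
    apply mul_nonneg _ hθ.le
    exact_mod_cast (by omega : (0 : ℤ) ≤ n + 1)
  have hnθπ : ((n : ℝ) + 1) * (π / m) ≤ π := by
    have : (n : ℝ) + 1 ≤ m := by exact_mod_cast hnm.resolve_left hm0
    calc ((n : ℝ) + 1) * (π / m) ≤ m * (π / m) := by gcongr
      _ = π := by field_simp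
  rw [coxCos, if_neg hm0]
  refine nonneg_of_mul_nonneg_left ?_ hsin
  rw [U_real_cos]
  exact Real.sin_nonneg_of_nonneg_of_le_pi hnθ hnθπ

section Form

variable {B : Type*} [Fintype B] [DecidableEq B] (M : CoxeterMatrix B)

/-- The diagonal entries are `-coxCos 1 = 1`. -/
noncomputable def coxBilinForm : LinearMap.BilinForm ℝ (B → ℝ) :=
  (-M.M.map coxCos).toBilin'

lemma coxForm_eq_coxBilinForm (ξ η : B → ℝ) : coxForm M ξ η = coxBilinForm M ξ η := by
  simp only [coxForm, coxBilinForm, Matrix.toBilin'_apply]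
  refine Finset.sum_congr rfl fun s _ => Finset.sum_congr rfl fun t _ => ?_
  rcases eq_or_ne s t with rfl | hst
  · simp [coxCos_one]
  · simp only [if_neg hst, coxCos, Matrix.neg_apply, Matrix.map_apply]
    split_ifs <;> ring

lemma coxBilinForm_single_single (i j : B) :
    coxBilinForm M (Pi.single i 1) (Pi.single j 1) = -coxCos (M i j) :=
  Matrix.toBilin'_single _ i j

lemma coxBilinForm_isSymm : (coxBilinForm M).IsSymm :=
  Matrix.isSymm_toBilin'_iff_isSymm.mpr (M.isSymm.map _).neg

end Form

namespace CoxeterSystem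

variable {B : Type*} {W : Type*} [Group W] {M : CoxeterMatrix B} (cs : CoxeterSystem M W)

theorem exists_parabolic_factorization (I : Set B) (w : W) :
    ∃ v u, u ∈ Subgroup.closure (cs.simple '' I) ∧ v * u = w ∧
      cs.length v + cs.length u = cs.length w ∧
        ∀ i ∈ I, cs.length v < cs.length (v * cs.simple i) := by
  induction hw : cs.length w using Nat.strong_induction_on generalizing w with
  | _ n ih =>
  by_cases hdesc : ∃ i ∈ I, cs.IsRightDescent w i
  · obtain ⟨i, hi, hwi⟩ := hdesc
    obtain ⟨v, u, hu, hvu, hlen, hv⟩ := ih _ (hw ▸ hwi) (w * cs.simple i) rfl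
    refine ⟨v, u * cs.simple i, mul_mem hu (Subgroup.subset_closure ⟨i, hi, rfl⟩), ?_, ?_, hv⟩
    · rw [← mul_assoc, hvu, simple_mul_simple_cancel_right]
    · have hle := cs.length_mul_le u (cs.simple i)
      have hge := cs.length_mul_le v (u * cs.simple i)
      rw [length_simple] at hle
      rw [← mul_assoc, hvu, simple_mul_simple_cancel_right] at hge
      have := (cs.length_mul_simple w i).resolve_left (by unfold IsRightDescent at hwi; omega)
      omega
  · push Not at hdesc
    refine ⟨w, 1, one_mem _, mul_one w, by simp [hw], fun i hi => ?_⟩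
    have := cs.length_mul_simple_ne w i
    have := hdesc i hi
    unfold IsRightDescent at this
    omega

/-- At length `m(i, j)` the braid relation would let the word end in `i`. -/
theorem lt_of_length_wordProd_alternatingWord {i j : B} (hM : M i j ≠ 0) {n : ℕ}
    (hred : cs.length (cs.wordProd (alternatingWord i j n)) = n)
    (hi : cs.length (cs.wordProd (alternatingWord i j n)) <
      cs.length (cs.wordProd (alternatingWord i j n) * cs.simple i)) :
    n < M i j := by
  have hle : n ≤ M i j := by
    by_contra! hlt
    exact cs.not_isReduced_alternatingWord i j hM hlt
      (by rw [IsReduced, hred, length_alternatingWord])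
  refine lt_of_le_of_ne hle fun hn => ?_
  obtain ⟨k, rfl⟩ : ∃ k, n = k + 1 := Nat.exists_eq_add_one.mpr (by omega)
  have hbraid : cs.wordProd (alternatingWord i j (k + 1)) =
      cs.wordProd (alternatingWord i j k) * cs.simple i := by
    rw [← wordProd_concat, ← alternatingWord_succ, hn]
    have := cs.wordProd_braidWord_eq i j
    rwa [braidWord, braidWord, M.symmetric j i] at this
  rw [hbraid] at hred hi
  rw [simple_mul_simple_cancel_right] at hi
  have := cs.length_wordProd_le (alternatingWord i j k)
  rw [length_alternatingWord] at this
  omega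

end CoxeterSystem

section Hyperplanes

lemma image_setOf_apply_eq_zero {R V : Type*} [CommRing R] [AddCommGroup V] [Module R V]
    (e : V ≃ₗ[R] V) {φ : Module.Dual R V → Module.Dual R V}
    (hφ : ∀ f x, φ f x = f (e.symm x)) (x : V) :
    φ '' {f | f x = 0} = {f | f (e x) = 0} := by
  ext f
  constructor
  · rintro ⟨f, hf, rfl⟩
    simpa [hφ] using hf
  · intro hf
    refine ⟨f ∘ₗ e.toLinearMap, hf, LinearMap.ext fun y => ?_⟩
    simp [hφ]

lemma exists_eq_smul_of_setOf_apply_eq_zero_eq {K V : Type*} [Field K] [AddCommGroup V]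
    [Module K V] {x y : V} (h : {f : Module.Dual K V | f x = 0} = {f | f y = 0}) :
    ∃ r : K, y = r • x := by
  have hann (z : V) : ((K ∙ z).dualAnnihilator : Set (Module.Dual K V)) = {f | f z = 0} := by
    ext f
    simp only [SetLike.mem_coe, Submodule.mem_dualAnnihilator, Set.mem_ofPred_eq]
    refine ⟨fun hf => hf z (Submodule.mem_span_singleton_self z), fun hf w hw => ?_⟩
    obtain ⟨a, rfl⟩ := Submodule.mem_span_singleton.mp hw
    rw [map_smul, hf, smul_zero]
  have hspan : K ∙ x = K ∙ y := by
    rw [← Subspace.dualAnnihilator_inj, ← SetLike.coe_set_eq, hann, hann, h]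
  obtain ⟨r, hr⟩ := Submodule.mem_span_singleton.mp (hspan ▸ Submodule.mem_span_singleton_self y)
  exact ⟨r, hr.symm⟩

lemma setOf_eq_zero_inter_segment_nonempty_iff {E : Type*} [AddCommGroup E] [Module ℝ E]
    (φ : E →ₗ[ℝ] ℝ) (a b : E) :
    ({x | φ x = 0} ∩ segment ℝ a b).Nonempty ↔ (0 : ℝ) ∈ Set.uIcc (φ a) (φ b) := by
  have himage := image_segment ℝ φ.toAffineMap a b
  rw [LinearMap.coe_toAffineMap] at himage
  rw [← segment_eq_uIcc, ← himage]
  simp [Set.Nonempty, and_comm]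

variable {B : Type*} [Fintype B] [DecidableEq B] {c : (B → ℝ) →ₗ[ℝ] ℝ}

lemma apply_pos_of_nonneg (hc : ∀ i, 0 < c (Pi.single i 1)) {ξ : B → ℝ} (hξ : 0 ≤ ξ)
    (hξ0 : ξ ≠ 0) : 0 < c ξ := by
  obtain ⟨i, hi⟩ := Function.ne_iff.mp hξ0
  calc 0 < ∑ j, ξ j * c (Pi.single j 1) :=
        Finset.sum_pos' (fun j _ => mul_nonneg (hξ j) (hc j).le)
          ⟨i, Finset.mem_univ _, mul_pos ((hξ i).lt_of_ne' hi) (hc i)⟩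
    _ = c ξ := by
      conv_rhs => rw [← Finset.univ_sum_single ξ]
      rw [map_sum]
      refine Finset.sum_congr rfl fun j _ => ?_
      rw [← smul_eq_mul, ← map_smul, ← Pi.single_smul', smul_eq_mul, mul_one]

end Hyperplanes

section Representation

variable {B : Type*} {W : Type*} [Group W] {M : CoxeterMatrix B}

lemma MonoidHom.linearEquiv_map_mul_apply {V : Type*} [AddCommGroup V] [Module ℝ V]
    (ρ : W →* (V ≃ₗ[ℝ] V)) (u v : W) (ξ : V) : ρ (u * v) ξ = ρ u (ρ v ξ) := by
  rw [map_mul, LinearEquiv.mul_apply]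

lemma CoxeterSystem.apply_simple_apply_simple {cs : CoxeterSystem M W} {V : Type*}
    [AddCommGroup V] [Module ℝ V] {ρ : W →* (V ≃ₗ[ℝ] V)} (i : B) (ξ : V) :
    ρ (cs.simple i) (ρ (cs.simple i) ξ) = ξ := by
  rw [← ρ.linearEquiv_map_mul_apply, cs.simple_mul_simple_self, map_one, LinearEquiv.coe_one, id]

variable [DecidableEq B]

def rootSet (ρ : W →* ((B → ℝ) ≃ₗ[ℝ] (B → ℝ))) : Set (B → ℝ) :=
  {β | ∃ w i, ρ w (Pi.single i 1) = β}

/-- Positivity `0 ≤ β` is coordinatewise, i.e. with respect to the simple roots. -/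
def inversionSet (ρ : W →* ((B → ℝ) ≃ₗ[ℝ] (B → ℝ))) (g : W) : Set (B → ℝ) :=
  {β ∈ rootSet ρ | 0 ≤ β ∧ ρ g⁻¹ β ≤ 0}

def IsGeometricRepresentation [Fintype B] (cs : CoxeterSystem M W)
    (ρ : W →* ((B → ℝ) ≃ₗ[ℝ] (B → ℝ))) : Prop :=
  ∀ i ξ, ρ (cs.simple i) ξ = ξ - (2 * coxBilinForm M (Pi.single i 1) ξ) • Pi.single i 1

variable {ρ : W →* ((B → ℝ) ≃ₗ[ℝ] (B → ℝ))}

lemma single_mem_rootSet (i : B) : Pi.single i 1 ∈ rootSet ρ := ⟨1, i, by simp⟩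

lemma apply_mem_rootSet (w : W) {β : B → ℝ} (hβ : β ∈ rootSet ρ) : ρ w β ∈ rootSet ρ := by
  obtain ⟨v, i, rfl⟩ := hβ
  exact ⟨w * v, i, ρ.linearEquiv_map_mul_apply w v _⟩

lemma ne_zero_of_mem_rootSet {β : B → ℝ} (hβ : β ∈ rootSet ρ) : β ≠ 0 := by
  obtain ⟨w, i, rfl⟩ := hβ
  simp

lemma inversionSet_one : inversionSet ρ 1 = ∅ := by
  refine Set.eq_empty_of_forall_notMem fun β ⟨hβ, hβ0, hβ1⟩ => ne_zero_of_mem_rootSet hβ ?_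
  exact le_antisymm (by simpa using hβ1) hβ0

end Representation

namespace IsGeometricRepresentation

open CoxeterSystem

variable {B : Type*} [Fintype B] [DecidableEq B] {W : Type*} [Group W] {M : CoxeterMatrix B}
  {cs : CoxeterSystem M W} {ρ : W →* ((B → ℝ) ≃ₗ[ℝ] (B → ℝ))}
  (hρ : IsGeometricRepresentation cs ρ)
include hρ

lemma apply_simple (i : B) (ξ : B → ℝ) :
    ρ (cs.simple i) ξ = ξ - (2 * coxBilinForm M (Pi.single i 1) ξ) • Pi.single i 1 :=
  hρ i ξ

lemma apply_simple_single (i j : B) :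
    ρ (cs.simple i) (Pi.single j 1) = Pi.single j 1 + (2 * coxCos (M i j)) • Pi.single i 1 := by
  rw [hρ.apply_simple, coxBilinForm_single_single, sub_eq_add_neg, ← neg_smul, mul_neg, neg_neg]

lemma apply_simple_single_self (i : B) : ρ (cs.simple i) (Pi.single i 1) = -Pi.single i 1 := by
  rw [apply_simple_single hρ, M.diagonal, coxCos_one]
  module

lemma coxBilinForm_apply_simple_apply_simple (i : B) (ξ η : B → ℝ) :
    coxBilinForm M (ρ (cs.simple i) ξ) (ρ (cs.simple i) η) = coxBilinForm M ξ η := by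
  have hii : coxBilinForm M (Pi.single i 1) (Pi.single i 1) = 1 := by
    rw [coxBilinForm_single_single, M.diagonal, coxCos_one, neg_neg]
  simp only [hρ.apply_simple, map_sub, map_smul, LinearMap.sub_apply, LinearMap.smul_apply,
    smul_eq_mul, hii, (coxBilinForm_isSymm M).eq _ (Pi.single i 1)]
  ring

lemma coxBilinForm_apply_apply (w : W) (ξ η : B → ℝ) :
    coxBilinForm M (ρ w ξ) (ρ w η) = coxBilinForm M ξ η := by
  induction w using cs.simple_induction_left generalizing ξ η with
  | one => simp
  | mul_simple_left w i ih =>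
    rw [ρ.linearEquiv_map_mul_apply, ρ.linearEquiv_map_mul_apply,
      hρ.coxBilinForm_apply_simple_apply_simple, ih]

lemma apply_apply_of_notMem {I : Set B} {u : W} (hu : u ∈ Subgroup.closure (cs.simple '' I))
    {b : B} (hb : b ∉ I) (ξ : B → ℝ) : ρ u ξ b = ξ b := by
  induction hu using Subgroup.closure_induction generalizing ξ with
  | mem x hx =>
    obtain ⟨i, hi, rfl⟩ := hx
    simp [hρ.apply_simple, Pi.single_eq_of_ne (ne_of_mem_of_not_mem hi hb).symm]
  | one => simp
  | mul u v _ _ ihu ihv => rw [ρ.linearEquiv_map_mul_apply, ihu, ihv]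
  | inv u _ ihu => rw [← ihu (ρ u⁻¹ ξ), ← ρ.linearEquiv_map_mul_apply, mul_inv_cancel, map_one]; rfl

lemma apply_mul_simple_single (w : W) (i : B) :
    ρ (w * cs.simple i) (Pi.single i 1) = -ρ w (Pi.single i 1) := by
  rw [ρ.linearEquiv_map_mul_apply, hρ.apply_simple_single_self, map_neg]

/-- The coefficients are Chebyshev values `Uₖ(c)`, `Uₖ₋₁(c)` at `c = cos (π / m(i, j))`, since
both satisfy the recursion `x ↦ 2 c x - x'` of the rank-two reflections. -/
lemma apply_wordProd_alternatingWord (i j : B) (k : ℕ) :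
    ρ (cs.wordProd (alternatingWord i j k)) (Pi.single i 1) =
      if Even k then
        (U ℝ k).eval (coxCos (M i j)) • Pi.single i 1 +
          (U ℝ ((k : ℤ) - 1)).eval (coxCos (M i j)) • Pi.single j 1
      else
        (U ℝ k).eval (coxCos (M i j)) • Pi.single j 1 +
          (U ℝ ((k : ℤ) - 1)).eval (coxCos (M i j)) • Pi.single i 1 := by
  induction k with
  | zero => simp [alternatingWord]
  | succ k ih =>
    have hU : (U ℝ ((k + 1 : ℕ) : ℤ)).eval (coxCos (M i j)) =
        2 * coxCos (M i j) * (U ℝ k).eval (coxCos (M i j)) -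
          (U ℝ ((k : ℤ) - 1)).eval (coxCos (M i j)) := by
      simp [U_add_one]
    have hk : ((k + 1 : ℕ) : ℤ) - 1 = k := by omega
    rw [alternatingWord_succ', wordProd_cons, ρ.linearEquiv_map_mul_apply, ih, hU, hk]
    rcases Nat.even_or_odd k with heven | hodd
    · rw [if_pos heven, if_pos heven, if_neg (Nat.not_even_iff_odd.mpr heven.add_one),
        map_add, map_smul, map_smul, hρ.apply_simple_single, hρ.apply_simple_single_self,
        M.symmetric j i]
      module
    · rw [if_neg (Nat.not_even_iff_odd.mpr hodd), if_neg (Nat.not_even_iff_odd.mpr hodd),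
        if_pos hodd.add_one, map_add, map_smul, map_smul, hρ.apply_simple_single,
        hρ.apply_simple_single_self]
      module

/-- A descent `l ∉ I` of `u ∈ W_I` is impossible: positivity for `u sₗ` would make the `l`-th
coordinate of `u αₗ = -(u sₗ) αₗ` nonpositive, while `u` does not move it. -/
lemma mem_of_isRightDescent {I : Set B} {u : W} (hu : u ∈ Subgroup.closure (cs.simple '' I))
    (hpos : ∀ x i, cs.length x < cs.length u → cs.length x < cs.length (x * cs.simple i) →
      0 ≤ ρ x (Pi.single i 1))
    {l : B} (hl : cs.IsRightDescent u l) : l ∈ I := by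
  by_contra hlI
  have hx : cs.length (u * cs.simple l) < cs.length (u * cs.simple l * cs.simple l) := by
    rwa [simple_mul_simple_cancel_right]
  have hnonneg : 0 ≤ ρ (u * cs.simple l) (Pi.single l 1) l := hpos _ l hl hx l
  have hfix := hρ.apply_apply_of_notMem hu hlI (Pi.single l 1)
  rw [← simple_mul_simple_cancel_right cs (w := u) l, hρ.apply_mul_simple_single] at hfix
  simp only [Pi.neg_apply, Pi.single_eq_same] at hfix
  linarith

lemma eq_wordProd_alternatingWord {i j : B} (hij : i ≠ j) {u : W}
    (hu : u ∈ Subgroup.closure (cs.simple '' {i, j}))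
    (hpos : ∀ x p, cs.length x < cs.length u → cs.length x < cs.length (x * cs.simple p) →
      0 ≤ ρ x (Pi.single p 1))
    (hui : cs.length u < cs.length (u * cs.simple i)) :
    u = cs.wordProd (alternatingWord i j (cs.length u)) := by
  induction hn : cs.length u generalizing u i j with
  | zero => simp [cs.length_eq_zero_iff.mp hn, alternatingWord]
  | succ n ih =>
    have hu1 : u ≠ 1 := by rintro rfl; simp at hn
    obtain ⟨l, hl⟩ := cs.exists_rightDescent_of_ne_one hu1
    obtain rfl : l = j := by
      rcases hρ.mem_of_isRightDescent hu hpos hl with rfl | rfl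
      · exact absurd hl (by unfold IsRightDescent; omega)
      · rfl
    have hlen : cs.length (u * cs.simple l) = n := by
      have := cs.length_mul_simple u l
      unfold IsRightDescent at hl
      omega
    have hu' : u * cs.simple l ∈ Subgroup.closure (cs.simple '' {l, i}) := by
      rw [Set.pair_comm]
      exact mul_mem hu (Subgroup.subset_closure ⟨l, by simp, rfl⟩)
    have hrec := ih hij.symm hu' (fun x p hx => hpos x p (by omega))
      (by rwa [simple_mul_simple_cancel_right]) hlen
    rw [alternatingWord_succ, wordProd_concat, ← hrec, simple_mul_simple_cancel_right]

lemma exists_nonneg_apply_single_eq_of_mem_closure_pair {i j : B} (hij : i ≠ j) {u : W}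
    (hu : u ∈ Subgroup.closure (cs.simple '' {i, j}))
    (hpos : ∀ x p, cs.length x < cs.length u → cs.length x < cs.length (x * cs.simple p) →
      0 ≤ ρ x (Pi.single p 1))
    (hui : cs.length u < cs.length (u * cs.simple i)) :
    ∃ a b : ℝ, 0 ≤ a ∧ 0 ≤ b ∧ ρ u (Pi.single i 1) = a • Pi.single i 1 + b • Pi.single j 1 := by
  have hw := hρ.eq_wordProd_alternatingWord hij hu hpos hui
  have hlt : M i j = 0 ∨ cs.length u + 1 ≤ M i j := by
    refine or_iff_not_imp_left.mpr fun hM => cs.lt_of_length_wordProd_alternatingWord hM ?_ ?_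
    · exact (congrArg cs.length hw).symm
    · rwa [← hw]
  have hM1 := M.off_diagonal i j hij
  have h1 : 0 ≤ (U ℝ (cs.length u)).eval (coxCos (M i j)) :=
    U_eval_coxCos_nonneg hM1 (by omega) (by omega)
  have h0 : 0 ≤ (U ℝ ((cs.length u : ℤ) - 1)).eval (coxCos (M i j)) :=
    U_eval_coxCos_nonneg hM1 (by omega) (by omega)
  have hformula := hρ.apply_wordProd_alternatingWord i j (cs.length u)
  rw [← hw] at hformula
  rw [hformula]
  split_ifs
  · exact ⟨_, _, h1, h0, rfl⟩
  · exact ⟨_, _, h0, h1, add_comm _ _⟩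

/-- Root positivity, by induction on `ℓ w`: with `j` a right descent of `w`, factor
`w = v u` with `u ∈ W_{ij}` and `v` without descents in `{i, j}`; then `u αᵢ` is a nonnegative
combination of `αᵢ, αⱼ`, which `v` maps to nonnegative vectors. -/
theorem nonneg_apply_single_of_length_lt {w : W} {i : B}
    (h : cs.length w < cs.length (w * cs.simple i)) : 0 ≤ ρ w (Pi.single i 1) := by
  induction hn : cs.length w using Nat.strong_induction_on generalizing w i with
  | _ n ih =>
  have hpos : ∀ x p, cs.length x < n → cs.length x < cs.length (x * cs.simple p) →
      0 ≤ ρ x (Pi.single p 1) := fun x p hx hxp => ih _ hx hxp rfl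
  rcases eq_or_ne w 1 with rfl | hw1
  · simp
  obtain ⟨j, hj⟩ := cs.exists_rightDescent_of_ne_one hw1
  unfold IsRightDescent at hj
  have hij : i ≠ j := by rintro rfl; omega
  obtain ⟨v, u, hu, rfl, hlen, hv⟩ := cs.exists_parabolic_factorization {i, j} w
  have hvi := hv i (by simp)
  have hvj := hv j (by simp)
  have hu1 : u ≠ 1 := by rintro rfl; rw [mul_one] at hj; omega
  have hu0 : 0 < cs.length u := Nat.pos_of_ne_zero (cs.length_eq_zero_iff.not.mpr hu1)
  have hui : cs.length u < cs.length (u * cs.simple i) := by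
    have := cs.length_mul_le v (u * cs.simple i)
    rw [← mul_assoc] at this
    omega
  obtain ⟨a, b, ha, hb, hab⟩ := hρ.exists_nonneg_apply_single_eq_of_mem_closure_pair hij hu
    (fun x p hx => hpos x p (by omega)) hui
  rw [ρ.linearEquiv_map_mul_apply, hab, map_add, map_smul, map_smul]
  exact add_nonneg (smul_nonneg ha (hpos v i (by omega) hvi))
    (smul_nonneg hb (hpos v j (by omega) hvj))

lemma apply_single_nonpos_of_length_lt {w : W} {i : B}
    (h : cs.length (w * cs.simple i) < cs.length w) : ρ w (Pi.single i 1) ≤ 0 := by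
  have := hρ.nonneg_apply_single_of_length_lt (w := w * cs.simple i) (i := i)
    (by rwa [simple_mul_simple_cancel_right])
  rwa [hρ.apply_mul_simple_single, neg_nonneg] at this

lemma neg_mem_rootSet {β : B → ℝ} (hβ : β ∈ rootSet ρ) : -β ∈ rootSet ρ := by
  obtain ⟨w, i, rfl⟩ := hβ
  exact ⟨w * cs.simple i, i, hρ.apply_mul_simple_single w i⟩

lemma nonneg_or_nonpos_of_mem_rootSet {β : B → ℝ} (hβ : β ∈ rootSet ρ) : 0 ≤ β ∨ β ≤ 0 := by
  obtain ⟨w, i, rfl⟩ := hβ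
  rcases cs.length_mul_simple w i with h | h
  · exact .inl (hρ.nonneg_apply_single_of_length_lt (by omega))
  · exact .inr (hρ.apply_single_nonpos_of_length_lt (by omega))

lemma coxBilinForm_self_of_mem_rootSet {β : B → ℝ} (hβ : β ∈ rootSet ρ) :
    coxBilinForm M β β = 1 := by
  obtain ⟨w, i, rfl⟩ := hβ
  rw [hρ.coxBilinForm_apply_apply, coxBilinForm_single_single, M.diagonal, coxCos_one, neg_neg]

/-- Roots have `B`-norm one, so a root proportional to a positive root `β` is `± β`. -/
lemma eq_of_eq_smul {β β' : B → ℝ} (hβ : β ∈ rootSet ρ) (hβ' : β' ∈ rootSet ρ)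
    (hβ0 : 0 ≤ β) (hβ'0 : 0 ≤ β') {r : ℝ} (h : β' = r • β) : β' = β := by
  have hr : r * r = 1 := by
    have := hρ.coxBilinForm_self_of_mem_rootSet hβ'
    simpa [h, hρ.coxBilinForm_self_of_mem_rootSet hβ] using this
  rcases mul_self_eq_one_iff.mp hr with rfl | rfl
  · rw [h, one_smul]
  · refine absurd (le_antisymm ?_ hβ0) (ne_zero_of_mem_rootSet hβ)
    simpa [h] using hβ'0

/-- `sᵢ` only changes the `i`-th coordinate, so a positive root that it makes negative is a
multiple of `αᵢ`, hence `αᵢ` itself. -/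
lemma nonneg_apply_simple_of_ne {β : B → ℝ} (hβ : β ∈ rootSet ρ) (hβ0 : 0 ≤ β) {i : B}
    (hβi : β ≠ Pi.single i 1) : 0 ≤ ρ (cs.simple i) β := by
  refine (hρ.nonneg_or_nonpos_of_mem_rootSet (apply_mem_rootSet _ hβ)).resolve_right fun hneg => ?_
  have hcoord : ∀ b ≠ i, β b = 0 := fun b hb => by
    have := hneg b
    rw [hρ.apply_simple] at this
    simp only [Pi.sub_apply, Pi.smul_apply, Pi.single_eq_of_ne hb, smul_zero, sub_zero] at this
    exact le_antisymm this (hβ0 b)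
  refine hβi (hρ.eq_of_eq_smul (single_mem_rootSet i) hβ (by simp) hβ0 (r := β i) ?_)
  ext b
  rcases eq_or_ne b i with rfl | hb
  · simp
  · simp [hcoord b hb, Pi.single_eq_of_ne hb]

lemma inversionSet_eq_insert_image {g : W} {i : B} (h : cs.IsLeftDescent g i) :
    inversionSet ρ g =
      insert (Pi.single i 1) (ρ (cs.simple i) '' inversionSet ρ (cs.simple i * g)) := by
  have hinv (ξ : B → ℝ) : ρ (cs.simple i * g)⁻¹ ξ = ρ g⁻¹ (ρ (cs.simple i) ξ) := by
    rw [mul_inv_rev, inv_simple, ρ.linearEquiv_map_mul_apply]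
  have hgi : ρ g⁻¹ (Pi.single i 1) ≤ 0 :=
    hρ.apply_single_nonpos_of_length_lt (cs.isRightDescent_inv_iff.mpr h)
  ext β
  constructor
  · rintro ⟨hβ, hβ0, hgβ⟩
    refine or_iff_not_imp_left.mpr fun hβi => ⟨ρ (cs.simple i) β, ⟨apply_mem_rootSet _ hβ,
      hρ.nonneg_apply_simple_of_ne hβ hβ0 hβi, ?_⟩, apply_simple_apply_simple i β⟩
    rwa [hinv, apply_simple_apply_simple]
  · rintro (rfl | ⟨β, ⟨hβ, hβ0, hgβ⟩, rfl⟩)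
    · exact ⟨single_mem_rootSet i, by simp, hgi⟩
    have hβi : β ≠ Pi.single i 1 := by
      rintro rfl
      rw [hinv, hρ.apply_simple_single_self, map_neg, neg_nonpos] at hgβ
      exact ne_zero_of_mem_rootSet (apply_mem_rootSet _ (single_mem_rootSet i))
        (le_antisymm hgi hgβ)
    refine ⟨apply_mem_rootSet _ hβ, hρ.nonneg_apply_simple_of_ne hβ hβ0 hβi, ?_⟩
    rwa [← hinv]

theorem encard_inversionSet (g : W) : (inversionSet ρ g).encard = cs.length g := by
  induction hn : cs.length g generalizing g with
  | zero => simp [cs.length_eq_zero_iff.mp hn, inversionSet_one]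
  | succ n ih =>
    have hg1 : g ≠ 1 := by rintro rfl; simp at hn
    obtain ⟨i, hi⟩ := cs.exists_leftDescent_of_ne_one hg1
    have hlen : cs.length (cs.simple i * g) = n := by
      have := cs.length_simple_mul g i
      unfold IsLeftDescent at hi
      omega
    have hnotMem : Pi.single i 1 ∉ ρ (cs.simple i) '' inversionSet ρ (cs.simple i * g) := by
      rintro ⟨β, ⟨-, hβ0, -⟩, hβ⟩
      have := hβ0 i
      rw [← apply_simple_apply_simple (cs := cs) (ρ := ρ) i β, hβ,
        hρ.apply_simple_single_self] at this
      norm_num at this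
    rw [hρ.inversionSet_eq_insert_image hi, Set.encard_insert_of_notMem hnotMem,
      (ρ (cs.simple i)).injective.encard_image, ih _ hlen]
    rfl

lemma setOf_exists_image_eq_image_rootSet
    {dualAct : W → Module.Dual ℝ (B → ℝ) → Module.Dual ℝ (B → ℝ)}
    (hdual : ∀ w f ξ, dualAct w f ξ = f (ρ w⁻¹ ξ)) :
    {Z | ∃ w i, Z = dualAct w '' {f : Module.Dual ℝ (B → ℝ) | f (Pi.single i 1) = 0}} =
      (fun β => {f : Module.Dual ℝ (B → ℝ) | f β = 0}) '' {β ∈ rootSet ρ | 0 ≤ β} := by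
  have himage (w : W) (i : B) : dualAct w '' {f | f (Pi.single i 1) = 0} =
      {f : Module.Dual ℝ (B → ℝ) | f (ρ w (Pi.single i 1)) = 0} :=
    image_setOf_apply_eq_zero _ (fun f ξ => by rw [hdual, map_inv, LinearEquiv.coe_inv]) _
  ext Z
  constructor
  · rintro ⟨w, i, rfl⟩
    rw [himage]
    rcases hρ.nonneg_or_nonpos_of_mem_rootSet ⟨w, i, rfl⟩ with h | h
    · exact ⟨_, ⟨⟨w, i, rfl⟩, h⟩, rfl⟩
    · exact ⟨_, ⟨hρ.neg_mem_rootSet ⟨w, i, rfl⟩, neg_nonneg.mpr h⟩, by simp⟩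
  · rintro ⟨β, ⟨⟨w, i, rfl⟩, -⟩, rfl⟩
    exact ⟨w, i, (himage w i).symm⟩

section Chamber

variable {c : (B → ℝ) →ₗ[ℝ] ℝ} (hc : ∀ i, 0 < c (Pi.single i 1))
include hc

lemma apply_nonpos_iff {β : B → ℝ} (hβ : β ∈ rootSet ρ) : c β ≤ 0 ↔ β ≤ 0 := by
  refine ⟨fun hcβ => ?_, fun hβ0 => ?_⟩
  · refine (hρ.nonneg_or_nonpos_of_mem_rootSet hβ).resolve_left fun hβ0 => ?_
    exact (apply_pos_of_nonneg hc hβ0 (ne_zero_of_mem_rootSet hβ)).not_ge hcβ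
  · have := apply_pos_of_nonneg hc (neg_nonneg.mpr hβ0)
      (neg_ne_zero.mpr (ne_zero_of_mem_rootSet hβ))
    rw [map_neg] at this
    linarith

lemma setOf_apply_eq_zero_inter_segment_nonempty_iff {g : W} {d : Module.Dual ℝ (B → ℝ)}
    (hd : ∀ ξ, d ξ = c (ρ g⁻¹ ξ)) {β : B → ℝ} (hβ : β ∈ rootSet ρ) (hβ0 : 0 ≤ β) :
    ({f : Module.Dual ℝ (B → ℝ) | f β = 0} ∩ segment ℝ d c).Nonempty ↔ ρ g⁻¹ β ≤ 0 := by
  have hcross := setOf_eq_zero_inter_segment_nonempty_iff (Module.Dual.eval ℝ (B → ℝ) β) d c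
  simp only [Module.Dual.eval_apply] at hcross
  have hcβ := apply_pos_of_nonneg hc hβ0 (ne_zero_of_mem_rootSet hβ)
  rw [hcross, hd, ← hρ.apply_nonpos_iff hc (apply_mem_rootSet _ hβ), Set.mem_uIcc]
  constructor
  · rintro (⟨h, -⟩ | ⟨h, -⟩)
    · exact h
    · linarith
  · exact fun h => .inl ⟨h, hcβ.le⟩

theorem ncard_setOf_inter_segment_nonempty {g : W} {d : Module.Dual ℝ (B → ℝ)}
    (hd : ∀ ξ, d ξ = c (ρ g⁻¹ ξ)) :
    {Z ∈ (fun β => {f : Module.Dual ℝ (B → ℝ) | f β = 0}) '' {β ∈ rootSet ρ | 0 ≤ β} |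
      (Z ∩ segment ℝ d c).Nonempty}.ncard = cs.length g := by
  have hcrossing : {Z ∈ (fun β => {f : Module.Dual ℝ (B → ℝ) | f β = 0}) ''
      {β ∈ rootSet ρ | 0 ≤ β} | (Z ∩ segment ℝ d c).Nonempty} =
        (fun β => {f : Module.Dual ℝ (B → ℝ) | f β = 0}) '' inversionSet ρ g := by
    ext Z
    constructor
    · rintro ⟨⟨β, ⟨hβ, hβ0⟩, rfl⟩, hZ⟩
      exact ⟨β, ⟨hβ, hβ0,
        (hρ.setOf_apply_eq_zero_inter_segment_nonempty_iff hc hd hβ hβ0).mp hZ⟩, rfl⟩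
    · rintro ⟨β, ⟨hβ, hβ0, hgβ⟩, rfl⟩
      exact ⟨⟨β, ⟨hβ, hβ0⟩, rfl⟩,
        (hρ.setOf_apply_eq_zero_inter_segment_nonempty_iff hc hd hβ hβ0).mpr hgβ⟩
  have hinj : Set.InjOn (fun β => {f : Module.Dual ℝ (B → ℝ) | f β = 0}) (inversionSet ρ g) :=
    fun β hβ β' hβ' h => by
      obtain ⟨r, hr⟩ := exists_eq_smul_of_setOf_apply_eq_zero_eq h
      exact (hρ.eq_of_eq_smul hβ.1 hβ'.1 hβ.2.1 hβ'.2.1 hr).symm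
  rw [hcrossing, hinj.ncard_image, Set.ncard_def, hρ.encard_inversionSet]
  rfl

end Chamber

end IsGeometricRepresentation

theorem stmt_2
    {B : Type*} [Fintype B] [DecidableEq B] {W : Type*} [Group W]
    {M : CoxeterMatrix B} (cs : CoxeterSystem M W)
    -- the geometric representation `σ : W →* GL(V)`, `V = B → ℝ`,
    -- with `σ_s ξ = ξ - 2 B(αs, ξ) αs` on the simple reflections
    (ρ : W →* ((B → ℝ) ≃ₗ[ℝ] (B → ℝ)))
    (hρ : ∀ (s : B) (ξ : B → ℝ),
      ρ (cs.simple s) ξ = ξ - (2 * coxForm M (Pi.single s 1) ξ) • (Pi.single s (1:ℝ) : B → ℝ))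
    -- the dual (adjoint) action on `V* = V →ₗ[ℝ] ℝ`: `(g • f)(ξ) = f (σ(g⁻¹) ξ)`
    (dualAct : W → ((B → ℝ) →ₗ[ℝ] ℝ) → ((B → ℝ) →ₗ[ℝ] ℝ))
    (hdual : ∀ (g : W) (f : (B → ℝ) →ₗ[ℝ] ℝ) (ξ : B → ℝ),
      dualAct g f ξ = f ((ρ g⁻¹) ξ))
    -- the hyperplanes `Z_s = {f ∈ V* : f(αs) = 0}` and the family `H = ⋃_{g,s} g Z_s`
    (Zs : B → Set ((B → ℝ) →ₗ[ℝ] ℝ))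
    (hZs : ∀ s, Zs s = {f | f (Pi.single s 1) = 0})
    (H : Set (Set ((B → ℝ) →ₗ[ℝ] ℝ)))
    (hH : H = {Z | ∃ (g : W) (s : B), Z = dualAct g '' Zs s})
    -- a point `c` of the open fundamental chamber `C = ⋂_s {f : f(αs) > 0}`
    (c : (B → ℝ) →ₗ[ℝ] ℝ) (hc : ∀ s : B, 0 < c (Pi.single s 1))
    (g : W) :
    {Z ∈ H | (Z ∩ segment ℝ (dualAct g c) c).Nonempty}.ncard = cs.length g := by
  have hρ' : IsGeometricRepresentation cs ρ := fun i ξ => by rw [hρ, coxForm_eq_coxBilinForm]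
  simp only [hZs] at hH
  rw [hH, hρ'.setOf_exists_image_eq_image_rootSet hdual]
  exact hρ'.ncard_setOf_inter_segment_nonempty hc (hdual g c)
end

section
/- Let (G,S) be a Coxeter system with word length function ℓ. Then ℓ is a conditionally negative definite function on G; that is, for any finitely many g₁,...,gₙ ∈ G and complex numbers c₁,...,cₙ with Σᵢ cᵢ = 0, one has Σ_{i,j} cᵢ · conj(cⱼ) · ℓ(gᵢ⁻¹gⱼ) ≤ 0. -/
/-!
Tits' sign action of `W` on `W × {±1}`, in which a simple reflection `s` sends `(t, ε)` to
`(s t s, ε)` and flips `ε` exactly when `t = s`, attaches to `w` and `t` a sign `η(w, t)`. It equals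
`-1` to the number of occurrences of `t` in the right inversion sequence of any word for `w`, and
satisfies the cocycle rule `η(u v, t) = η(v, t) η(u, v t v⁻¹)`. For a reduced word that sequence has
no repetitions, so the set `N w` of its entries has `ℓ w` elements and equals `{t | η(w, t) = -1}`.
The cocycle rule gives `N x ∆ N y = y⁻¹ N(x y⁻¹) y`, hence `ℓ (x y⁻¹) = #(N x ∆ N y)`: the length
is a squared Euclidean distance between indicator vectors, and squared Euclidean distances are
conditionally negative definite.
-/

open Finset ComplexConjugate
open scoped ComplexOrder symmDiff

section ConditionallyNegativeDefinite

variable {ι : Type*} [Fintype ι] {c : ι → ℂ}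

theorem sum_mul_conj_mul_sq_sub (hc : ∑ i, c i = 0) (x : ι → ℝ) :
    ∑ i, ∑ j, c i * conj (c j) * (((x i - x j) ^ 2 : ℝ) : ℂ) =
      -2 * (Complex.normSq (∑ i, c i * x i) : ℂ) := by
  have hc' : ∑ j, conj (c j) = 0 := by rw [← map_sum, hc, map_zero]
  rw [← Complex.mul_conj, map_sum]
  simp only [map_mul, Complex.conj_ofReal]
  calc _ = ∑ i, ∑ j, (c i * x i ^ 2 * conj (c j) + c i * (conj (c j) * x j ^ 2)
          - 2 * ((c i * x i) * (conj (c j) * x j))) := by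
        refine sum_congr rfl fun i _ => sum_congr rfl fun j _ => ?_
        push_cast
        ring
    _ = (∑ i, c i * x i ^ 2) * ∑ j, conj (c j) + (∑ i, c i) * ∑ j, conj (c j) * x j ^ 2
          - 2 * ((∑ i, c i * x i) * ∑ j, conj (c j) * x j) := by
        simp only [sum_mul_sum, ← mul_sum, sum_add_distrib, sum_sub_distrib]
    _ = _ := by rw [hc, hc']; ring

theorem sum_mul_conj_mul_sum_sq_sub_nonpos (hc : ∑ i, c i = 0) {α : Type*} (s : Finset α)
    (x : ι → α → ℝ) :
    ∑ i, ∑ j, c i * conj (c j) * ((∑ t ∈ s, (x i t - x j t) ^ 2 : ℝ) : ℂ) ≤ 0 := by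
  calc _ = ∑ t ∈ s, ∑ i, ∑ j, c i * conj (c j) * (((x i t - x j t) ^ 2 : ℝ) : ℂ) := by
        simp only [Complex.ofReal_sum, mul_sum]
        exact (sum_congr rfl fun i _ => sum_comm).trans sum_comm
    _ = ∑ t ∈ s, -2 * (Complex.normSq (∑ i, c i * x i t) : ℂ) :=
        sum_congr rfl fun t _ => sum_mul_conj_mul_sq_sub hc _
    _ ≤ 0 := sum_nonpos fun t _ => by
        rw [neg_mul, neg_nonpos]
        exact mul_nonneg (by norm_num) (Complex.zero_le_real.mpr (Complex.normSq_nonneg _))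

end ConditionallyNegativeDefinite

theorem card_symmDiff_eq_sum_sq_sub {α : Type*} [DecidableEq α] {s A B : Finset α}
    (hA : A ⊆ s) (hB : B ⊆ s) :
    (#(A ∆ B) : ℝ) =
      ∑ t ∈ s, ((if t ∈ A then 1 else 0) - (if t ∈ B then 1 else 0) : ℝ) ^ 2 := by
  have hsq : ∀ t, ((if t ∈ A then 1 else 0) - (if t ∈ B then 1 else 0) : ℝ) ^ 2 =
      if t ∈ A ∆ B then 1 else 0 := fun t => by
    by_cases htA : t ∈ A <;> by_cases htB : t ∈ B <;> simp [mem_symmDiff, htA, htB]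
  simp only [hsq, sum_boole, filter_mem_eq_inter,
    inter_eq_right.mpr (symmDiff_le_sup.trans (sup_le hA hB))]

namespace CoxeterSystem

variable {B W : Type*} [Group W] {M : CoxeterMatrix B} (cs : CoxeterSystem M W)

local prefix:100 "s" => cs.simple
local prefix:100 "π" => cs.wordProd
local prefix:100 "ℓ" => cs.length
local prefix:100 "ris" => cs.rightInvSeq

theorem simple_mul_mul_simple_eq_simple_iff (i : B) (t : W) : s i * t * s i = s i ↔ t = s i := by
  constructor
  · intro h
    simpa [mul_assoc] using congrArg (s i * · * s i) h
  · rintro rfl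
    simp

theorem simple_mul_mul_pow_mul_simple (i j : B) (r : ℕ) :
    s j * (s i * s j) ^ r * s j = ((s i * s j) ^ r)⁻¹ := by
  calc s j * (s i * s j) ^ r * s j = (s j * (s i * s j) * (s j)⁻¹) ^ r := by
        rw [conj_pow, inv_simple]
    _ = ((s i * s j)⁻¹) ^ r := by simp [mul_assoc]
    _ = _ := inv_pow _ _

variable [DecidableEq W]

def simpleSignPerm (i : B) : Equiv.Perm (W × ℤˣ) :=
  Function.Involutive.toPerm (fun x => (s i * x.1 * s i, if x.1 = s i then -x.2 else x.2))
    fun ⟨t, ε⟩ => by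
      have := cs.simple_mul_mul_simple_eq_simple_iff i t
      by_cases ht : t = s i <;> simp_all [mul_assoc]

theorem simpleSignPerm_apply (i : B) (t : W) (ε : ℤˣ) :
    cs.simpleSignPerm i (t, ε) = (s i * t * s i, if t = s i then -ε else ε) := rfl

theorem simpleSignPerm_mul_pow_apply (i j : B) (k : ℕ) (t : W) (ε : ℤˣ) :
    ((cs.simpleSignPerm i * cs.simpleSignPerm j) ^ k) (t, ε) =
      ((s i * s j) ^ k * t * ((s i * s j) ^ k)⁻¹,
        ε * ∏ r ∈ range (2 * k), if t = s j * (s i * s j) ^ r then -1 else 1) := by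
  induction k with
  | zero => simp
  | succ k ih =>
    set a := s i * s j with ha
    have hinv (r : ℕ) : (a ^ r)⁻¹ = s j * a ^ r * s j :=
      (cs.simple_mul_mul_pow_mul_simple i j r).symm
    have hconj_eq (x : W) : a ^ k * t * (a ^ k)⁻¹ = x ↔ t = s j * a ^ k * s j * x * a ^ k := by
      rw [← hinv]
      constructor <;> rintro rfl <;> group
    have heven : a ^ k * t * (a ^ k)⁻¹ = s j ↔ t = s j * a ^ (2 * k) := by
      rw [hconj_eq, two_mul, pow_add]
      simp [mul_assoc]
    have hodd : s j * (a ^ k * t * (a ^ k)⁻¹) * s j = s i ↔ t = s j * a ^ (2 * k + 1) := by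
      have hflip (x : W) : s j * x * s j = s i ↔ x = s j * s i * s j :=
        ⟨fun h => by simp [← h, mul_assoc], fun h => by simp [h, mul_assoc]⟩
      rw [hflip, hconj_eq, show 2 * k + 1 = k + 1 + k by ring, pow_add, pow_succ, ha]
      simp [mul_assoc]
    rw [pow_succ', Equiv.Perm.mul_apply, Equiv.Perm.mul_apply, ih, simpleSignPerm_apply,
      simpleSignPerm_apply]
    simp only [heven, hodd]
    rw [show 2 * (k + 1) = 2 * k + 1 + 1 by ring, prod_range_succ, prod_range_succ]
    refine Prod.ext ?_ ?_
    · simp only [ha, pow_succ', mul_inv_rev, inv_simple]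
      group
    · split_ifs <;> simp

theorem isLiftable_simpleSignPerm : M.IsLiftable cs.simpleSignPerm := by
  intro i j
  ext ⟨t, ε⟩ : 1
  -- since `(s i * s j) ^ M i j = 1`, the sign is a square: that of the first `M i j` factors
  have hperiodic (r : ℕ) : s j * (s i * s j) ^ (M i j + r) = s j * (s i * s j) ^ r := by
    rw [pow_add, cs.simple_mul_simple_pow, one_mul]
  rw [simpleSignPerm_mul_pow_apply, cs.simple_mul_simple_pow, two_mul, prod_range_add]
  simp only [hperiodic, Int.units_mul_self, one_mul, inv_one, mul_one, Equiv.Perm.one_apply]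

def signAction : W →* Equiv.Perm (W × ℤˣ) :=
  cs.lift ⟨cs.simpleSignPerm, cs.isLiftable_simpleSignPerm⟩

theorem signAction_simple (i : B) : cs.signAction (s i) = cs.simpleSignPerm i :=
  cs.lift_apply_simple cs.isLiftable_simpleSignPerm i

theorem signAction_wordProd_apply (ω : List B) (t : W) (ε : ℤˣ) :
    cs.signAction (π ω) (t, ε) = (π ω * t * (π ω)⁻¹, ε * (-1) ^ (ris ω).count t) := by
  induction ω with
  | nil => simp
  | cons i ω ih =>
    have hcond : π ω * t * (π ω)⁻¹ = s i ↔ (π ω)⁻¹ * s i * π ω = t := by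
      constructor
      · intro h
        rw [← h]
        group
      · rintro rfl
        group
    rw [wordProd_cons, map_mul, Equiv.Perm.mul_apply, ih, signAction_simple, simpleSignPerm_apply,
      rightInvSeq, List.count_cons]
    refine Prod.ext (by simp [mul_assoc]) ?_
    simp only [hcond, beq_iff_eq]
    split_ifs <;> simp [pow_succ]

def inversionSign (w t : W) : ℤˣ := (cs.signAction w (t, 1)).2

theorem signAction_apply (w t : W) (ε : ℤˣ) :
    cs.signAction w (t, ε) = (w * t * w⁻¹, ε * cs.inversionSign w t) := by
  obtain ⟨ω, rfl⟩ := cs.wordProd_surjective w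
  simp [inversionSign, signAction_wordProd_apply]

theorem inversionSign_wordProd (ω : List B) (t : W) :
    cs.inversionSign (π ω) t = (-1) ^ (ris ω).count t := by
  simp [inversionSign, signAction_wordProd_apply]

theorem inversionSign_mul (u v t : W) :
    cs.inversionSign (u * v) t = cs.inversionSign v t * cs.inversionSign u (v * t * v⁻¹) := by
  rw [inversionSign, map_mul, Equiv.Perm.mul_apply, signAction_apply, signAction_apply, one_mul]

theorem IsReduced.mem_rightInvSeq_iff {ω : List B} (hω : cs.IsReduced ω) {t : W} :
    t ∈ ris ω ↔ cs.inversionSign (π ω) t = -1 := by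
  rw [inversionSign_wordProd]
  by_cases ht : t ∈ ris ω
  · simp [ht, List.count_eq_one_of_mem hω.nodup_rightInvSeq ht]
  · simp [ht, List.count_eq_zero_of_not_mem ht]

noncomputable def rightInvFinset (w : W) : Finset W :=
  (ris (cs.exists_isReduced w).choose).toFinset

theorem card_rightInvFinset (w : W) : #(cs.rightInvFinset w) = ℓ w := by
  obtain ⟨hred, hw⟩ := (cs.exists_isReduced w).choose_spec
  rw [rightInvFinset, List.toFinset_card_of_nodup hred.nodup_rightInvSeq, length_rightInvSeq,
    ← hred.eq, ← hw]

theorem mem_rightInvFinset {w t : W} : t ∈ cs.rightInvFinset w ↔ cs.inversionSign w t = -1 := by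
  obtain ⟨hred, hw⟩ := (cs.exists_isReduced w).choose_spec
  rw [rightInvFinset, List.mem_toFinset, hred.mem_rightInvSeq_iff, ← hw]

theorem rightInvFinset_symmDiff (x y : W) :
    cs.rightInvFinset x ∆ cs.rightInvFinset y =
      (cs.rightInvFinset (x * y⁻¹)).map (MulAut.conj y⁻¹).toEquiv.toEmbedding := by
  ext t
  have hsign := cs.inversionSign_mul (x * y⁻¹) y t
  rw [inv_mul_cancel_right] at hsign
  rw [mem_symmDiff, mem_map_equiv, mem_rightInvFinset, mem_rightInvFinset, mem_rightInvFinset]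
  simp only [MulEquiv.toEquiv_eq_coe, MulEquiv.coe_toEquiv_symm, MulAut.conj_symm_apply, inv_inv]
  rcases Int.units_eq_one_or (cs.inversionSign y t) with h | h <;>
    simp [hsign, h, ← Int.units_ne_iff_eq_neg]

theorem length_mul_inv_eq_card_symmDiff (x y : W) :
    ℓ (x * y⁻¹) = #(cs.rightInvFinset x ∆ cs.rightInvFinset y) := by
  rw [rightInvFinset_symmDiff, card_map, card_rightInvFinset]

end CoxeterSystem

theorem stmt_3_general {B : Type*} {W : Type*} [Group W]
    {M : CoxeterMatrix B} (cs : CoxeterSystem M W)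
    (n : ℕ) (g : Fin n → W) (c : Fin n → ℂ) (hc : ∑ i, c i = 0) :
    (∑ i, ∑ j, c i * (starRingEnd ℂ) (c j) * (cs.length ((g i)⁻¹ * g j) : ℂ)).re ≤ 0 ∧
    (∑ i, ∑ j, c i * (starRingEnd ℂ) (c j) * (cs.length ((g i)⁻¹ * g j) : ℂ)).im = 0 := by
  classical
  set N : Fin n → Finset W := fun i => cs.rightInvFinset (g i)⁻¹
  set U := univ.biUnion N
  have hlength (i j : Fin n) : (cs.length ((g i)⁻¹ * g j) : ℂ) =
      ((∑ t ∈ U, ((if t ∈ N i then 1 else 0) - (if t ∈ N j then 1 else 0) : ℝ) ^ 2 : ℝ) : ℂ) := by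
    rw [← card_symmDiff_eq_sum_sq_sub (subset_biUnion_of_mem N (mem_univ i))
      (subset_biUnion_of_mem N (mem_univ j)), ← cs.length_mul_inv_eq_card_symmDiff, inv_inv]
    norm_cast
  simp only [hlength]
  exact Complex.le_def.mp (sum_mul_conj_mul_sum_sq_sub_nonpos hc U _)

/-- The word length of a Coxeter system is conditionally negative definite. -/
theorem stmt_3 {B : Type*} [Finite B] {W : Type*} [Group W]
    {M : CoxeterMatrix B} (cs : CoxeterSystem M W)
    (n : ℕ) (g : Fin n → W) (c : Fin n → ℂ) (hc : ∑ i, c i = 0) :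
    (∑ i, ∑ j, c i * (starRingEnd ℂ) (c j) * (cs.length ((g i)⁻¹ * g j) : ℂ)).re ≤ 0 ∧
    (∑ i, ∑ j, c i * (starRingEnd ℂ) (c j) * (cs.length ((g i)⁻¹ * g j) : ℂ)).im = 0 :=
  stmt_3_general cs n g c hc
end

section
/- Let (G,S) be a Coxeter system with word length function ℓ, and fix c in the open fundamental chamber. For g,h ∈ G, ℓ(g⁻¹h) = Σ_{Z∈H} |χ_h(Z) - χ_g(Z)|², where χ_g is the characteristic function of the set N^g of hyperplanes Z in H meeting the segment [g·c, c]. In particular g ↦ χ_g is a map into ℓ²(H) with ‖χ_g - χ_h‖² = ℓ(g⁻¹h). -/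
open scoped Real

/-!
Every hyperplane of `H` is the kernel `{f | f δ = 0}` of a root `δ = σ(u) α_s`. By the dihedral
computation and induction on length, `σ(w) α_s` has nonnegative coordinates whenever
`ℓ(w s) > ℓ(w)`, so every root is either nonnegative or nonpositive; hence `c` has a sign on
roots, each hyperplane is the kernel of exactly one positive root `δ`, and it meets `[g·c, c]`
iff `c(σ(g⁻¹) δ) < 0`. Therefore `χ_g` and `χ_h` differ exactly on the kernels of `σ(g) β`, where
`β` runs over the positive roots with `c(σ(w⁻¹) β) < 0` for `w = g⁻¹h`. There are `ℓ(w)` of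
those: multiplying `w` on the right by a simple reflection `s` with `ℓ(ws) > ℓ(w)` adds exactly
the root `σ(w) α_s`.
-/

namespace CoxeterMatrix

variable {B : Type*} [Fintype B] [DecidableEq B] (M : CoxeterMatrix B)

/-- Since `π / 0 = 0` in Lean, the entry `-cos (π / m(s,t))` is `-1` for `m(s,t) = ∞`
(encoded by `0`) and `1` for `s = t`, exactly as in `coxForm`. -/
noncomputable def bilinForm : LinearMap.BilinForm ℝ (B → ℝ) :=
  Matrix.toBilin' (Matrix.of fun s t => -Real.cos (π / M s t))

theorem bilinForm_single_single (s t : B) :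
    M.bilinForm (Pi.single s 1) (Pi.single t 1) = -Real.cos (π / M s t) := by
  simp [bilinForm]

theorem bilinForm_single_self (s : B) : M.bilinForm (Pi.single s 1) (Pi.single s 1) = 1 := by
  simp [bilinForm_single_single]

theorem bilinForm_comm (ξ η : B → ℝ) : M.bilinForm ξ η = M.bilinForm η ξ := by
  simp only [bilinForm, Matrix.toBilin'_apply, Matrix.of_apply]
  rw [Finset.sum_comm]
  refine Finset.sum_congr rfl fun s _ => Finset.sum_congr rfl fun t _ => ?_
  rw [M.symmetric]
  ring

theorem coxForm_eq_bilinForm (ξ η : B → ℝ) : coxForm M ξ η = M.bilinForm ξ η := by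
  simp only [coxForm, bilinForm, Matrix.toBilin'_apply, Matrix.of_apply]
  refine Finset.sum_congr rfl fun s _ => Finset.sum_congr rfl fun t _ => ?_
  split_ifs with hst hm
  · simp [hst]
  · simp [hm]
  · ring

end CoxeterMatrix

/-- Chebyshev's `U_(j-1)` at `cos (π / m)` (its limit `j` for `m = ∞`): the coordinates of
`σ(⋯ s_a s_b) α_a` on `α_a, α_b`. -/
noncomputable def dihedralCoeff (m j : ℕ) : ℝ :=
  if m = 0 then j else Real.sin (j * (π / m)) / Real.sin (π / m)

theorem dihedralCoeff_zero (m : ℕ) : dihedralCoeff m 0 = 0 := by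
  simp [dihedralCoeff]

theorem dihedralCoeff_one {m : ℕ} (hm : m ≠ 1) : dihedralCoeff m 1 = 1 := by
  rcases eq_or_ne m 0 with rfl | h0
  · simp [dihedralCoeff]
  have hm2 : (2 : ℝ) ≤ m := by exact_mod_cast (show 2 ≤ m by omega)
  have hsin : Real.sin (π / m) ≠ 0 := by
    refine (Real.sin_pos_of_pos_of_lt_pi (by positivity) ?_).ne'
    rw [div_lt_iff₀ (by linarith)]
    nlinarith [Real.pi_pos]
  simp [dihedralCoeff, h0, hsin]

theorem dihedralCoeff_add_two (m j : ℕ) :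
    dihedralCoeff m (j + 2) =
      2 * Real.cos (π / m) * dihedralCoeff m (j + 1) - dihedralCoeff m j := by
  unfold dihedralCoeff
  split_ifs with h0
  · simp [h0]
    ring
  · push_cast
    rw [show ((j : ℝ) + 2) * (π / m) = (j + 1) * (π / m) + π / m by ring, Real.sin_add,
      show (j : ℝ) * (π / m) = (j + 1) * (π / m) - π / m by ring, Real.sin_sub]
    ring

theorem dihedralCoeff_nonneg {m j : ℕ} (h : m = 0 ∨ j ≤ m) : 0 ≤ dihedralCoeff m j := by
  unfold dihedralCoeff
  split_ifs with h0
  · positivity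
  have hm : (1 : ℝ) ≤ m := by exact_mod_cast Nat.one_le_iff_ne_zero.mpr h0
  have hj : (j : ℝ) ≤ m := by exact_mod_cast h.resolve_left h0
  refine div_nonneg (Real.sin_nonneg_of_nonneg_of_le_pi (by positivity) ?_)
    (Real.sin_nonneg_of_nonneg_of_le_pi (by positivity) ?_)
  · calc (j : ℝ) * (π / m) ≤ m * (π / m) := by gcongr
      _ = π := by field_simp
  · exact div_le_self Real.pi_pos.le (by linarith)

theorem pos_apply_of_nonneg_of_ne_zero {B : Type*} [Fintype B] [DecidableEq B]
    {c : (B → ℝ) →ₗ[ℝ] ℝ} (hc : ∀ s, 0 < c (Pi.single s 1)) {ξ : B → ℝ} (hξ : 0 ≤ ξ)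
    (hne : ξ ≠ 0) : 0 < c ξ := by
  obtain ⟨j, hj⟩ := Function.ne_iff.mp hne
  have hcξ : c ξ = ∑ s, ξ s * c (Pi.single s 1) := by
    conv_lhs => rw [← Finset.univ_sum_single ξ]
    rw [map_sum]
    refine Finset.sum_congr rfl fun s _ => ?_
    rw [← smul_eq_mul, ← map_smul, ← Pi.single_smul, smul_eq_mul, mul_one]
  rw [hcξ]
  exact Finset.sum_pos' (fun s _ => mul_nonneg (hξ s) (hc s).le)
    ⟨j, Finset.mem_univ j, mul_pos (lt_of_le_of_ne (hξ j) (Ne.symm hj)) (hc j)⟩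

section DualHyperplane

variable {V : Type*} [AddCommGroup V] [Module ℝ V]

def dualHyperplane (v : V) : Set (V →ₗ[ℝ] ℝ) := {f | f v = 0}

theorem dualHyperplane_neg (v : V) : dualHyperplane (-v) = dualHyperplane v := by
  ext f
  simp [dualHyperplane]

theorem exists_eq_smul_of_dualHyperplane_eq {u v : V} (h : dualHyperplane u = dualHyperplane v) :
    ∃ r : ℝ, r • v = u := by
  rw [← Submodule.mem_span_singleton, ← Subspace.forall_mem_dualAnnihilator_apply_eq_zero_iff]
  intro f hf
  have hfv : f ∈ dualHyperplane v :=
    (Submodule.mem_dualAnnihilator f).mp hf v (Submodule.mem_span_singleton_self v)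
  rwa [← h] at hfv

theorem dualHyperplane_inter_segment_nonempty_iff (v : V) (p q : V →ₗ[ℝ] ℝ) :
    (dualHyperplane v ∩ segment ℝ p q).Nonempty ↔ (0 : ℝ) ∈ segment ℝ (p v) (q v) := by
  have h := image_segment ℝ (Module.Dual.eval ℝ V v).toAffineMap p q
  simp only [LinearMap.coe_toAffineMap, Module.Dual.eval_apply] at h
  rw [← h]
  simp [Set.Nonempty, dualHyperplane, and_comm]

theorem image_dualHyperplane {W : Type*} [Group W] {ρ : W →* (V ≃ₗ[ℝ] V)}
    {dualAct : W → (V →ₗ[ℝ] ℝ) → (V →ₗ[ℝ] ℝ)} (hdual : ∀ g f ξ, dualAct g f ξ = f (ρ g⁻¹ ξ))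
    (g : W) (v : V) : dualAct g '' dualHyperplane v = dualHyperplane (ρ g v) := by
  ext f
  constructor
  · rintro ⟨f, hf, rfl⟩
    simpa [dualHyperplane, hdual] using hf
  · intro hf
    refine ⟨dualAct g⁻¹ f, by simpa [dualHyperplane, hdual] using hf, LinearMap.ext fun ξ => ?_⟩
    simp [hdual]

end DualHyperplane

theorem tsum_indicator_range_one {ι κ : Type*} {φ : κ → ι} (hφ : φ.Injective) :
    ∑' i, (Set.range φ).indicator (1 : ι → ℝ) i = Nat.card κ := by
  rw [← hφ.tsum_eq Set.support_indicator_subset]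
  simp [tsum_const]

theorem sq_abs_ite_sub_ite (p q : Prop) [Decidable p] [Decidable q] :
    |(if q then (1 : ℝ) else 0) - if p then 1 else 0| ^ 2 = if Xor p q then 1 else 0 := by
  by_cases p <;> by_cases q <;> simp [*]

namespace CoxeterSystem

variable {B : Type*} {W : Type*} [Group W] {M : CoxeterMatrix B} (cs : CoxeterSystem M W)

theorem eq_zero_or_le_of_isReduced_alternatingWord {i i' : B} {k : ℕ}
    (h : cs.IsReduced (alternatingWord i i' k)) : M i i' = 0 ∨ k ≤ M i i' := by
  by_contra! hk
  exact cs.not_isReduced_alternatingWord i i' hk.1 hk.2 h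

theorem exists_eq_mul_wordProd_alternatingWord {w : W} {a b : B} (hb : cs.IsRightDescent w b) (ha : ¬ cs.IsRightDescent w a) :
    ∃ (v : W) (k : ℕ), 0 < k ∧ w = v * cs.wordProd (alternatingWord a b k) ∧
      cs.length w = cs.length v + k ∧ ¬ cs.IsRightDescent v a ∧ ¬ cs.IsRightDescent v b := by
  induction hn : cs.length w generalizing w a b with
  | zero =>
    rw [cs.length_eq_zero_iff.mp hn] at hb
    exact absurd hb (cs.not_isRightDescent_one b)
  | succ n ih =>
    have hlen : cs.length (w * cs.simple b) = n := by
      have := cs.isRightDescent_iff.mp hb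
      omega
    have hnb : ¬ cs.IsRightDescent (w * cs.simple b) b :=
      cs.isRightDescent_iff_not_isRightDescent_mul.mp hb
    by_cases ha' : cs.IsRightDescent (w * cs.simple b) a
    · obtain ⟨v, k, hk, heq, hlen', hva, hvb⟩ := ih ha' hnb hlen
      refine ⟨v, k + 1, k.succ_pos, ?_, by omega, hvb, hva⟩
      rw [alternatingWord_succ, wordProd_concat, ← mul_assoc, ← heq,
        simple_mul_simple_cancel_right]
    · refine ⟨w * cs.simple b, 1, one_pos, ?_, by omega, ha', hnb⟩
      rw [show alternatingWord a b 1 = [b] from rfl, wordProd_singleton,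
        simple_mul_simple_cancel_right]

variable [DecidableEq B] (ρ : W →* ((B → ℝ) ≃ₗ[ℝ] (B → ℝ)))

def IsRoot (β : B → ℝ) : Prop := ∃ (w : W) (i : B), ρ w (Pi.single i 1) = β

variable {ρ}

theorem IsRoot.apply {β : B → ℝ} (hβ : IsRoot ρ β) (w : W) : IsRoot ρ (ρ w β) := by
  obtain ⟨u, i, rfl⟩ := hβ
  exact ⟨w * u, i, by simp⟩

variable (c : (B → ℝ) →ₗ[ℝ] ℝ)

variable (ρ) in
/-- The positive roots sent to negative roots by `w⁻¹`: their hyperplanes are the ones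
separating `c` from `w • c`. -/
def inversionSet (w : W) : Set (B → ℝ) := {β | IsRoot ρ β ∧ 0 < c β ∧ c (ρ w⁻¹ β) < 0}

variable {c}

theorem inversionSet_one : inversionSet ρ c (1 : W) = ∅ := by
  ext β
  simp only [inversionSet, inv_one, map_one, LinearEquiv.coe_one, id_eq, Set.mem_ofPred_eq,
    Set.mem_empty_iff_false, iff_false]
  exact fun ⟨_, hpos, hneg⟩ => hneg.not_gt hpos

theorem apply_single_notMem_inversionSet (hc : ∀ s, 0 < c (Pi.single s 1)) (w : W) (i : B) :
    ρ w (Pi.single i 1) ∉ inversionSet ρ c w := fun ⟨_, _, hneg⟩ =>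
  (hc i).not_gt (by simpa using hneg)

variable [Fintype B]

variable (ρ) in
def IsGeometricRepresentation : Prop :=
  ∀ (s : B) (ξ : B → ℝ),
    ρ (cs.simple s) ξ = ξ - (2 * coxForm M (Pi.single s 1) ξ) • (Pi.single s (1:ℝ) : B → ℝ)

variable {cs} (hρ : cs.IsGeometricRepresentation ρ)
include hρ

namespace IsGeometricRepresentation

theorem apply_simple (s : B) (ξ : B → ℝ) :
    ρ (cs.simple s) ξ = ξ - (2 * M.bilinForm (Pi.single s 1) ξ) • Pi.single s 1 := by
  rw [hρ, CoxeterMatrix.coxForm_eq_bilinForm]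

theorem apply_simple_single (s : B) : ρ (cs.simple s) (Pi.single s 1) = -Pi.single s 1 := by
  rw [hρ.apply_simple, M.bilinForm_single_self]
  module

theorem apply_simple_apply_of_ne (ξ : B → ℝ) {s t : B} (hts : t ≠ s) :
    ρ (cs.simple s) ξ t = ξ t := by
  simp [hρ.apply_simple, hts]

theorem bilinForm_apply_apply (w : W) (ξ η : B → ℝ) :
    M.bilinForm (ρ w ξ) (ρ w η) = M.bilinForm ξ η := by
  induction w using cs.simple_induction_left generalizing ξ η with
  | one => simp
  | mul_simple_left w s ih =>
    simp only [map_mul, LinearEquiv.mul_apply, hρ.apply_simple, map_sub, map_smul,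
      LinearMap.sub_apply, LinearMap.smul_apply, smul_eq_mul, M.bilinForm_single_self, ih,
      M.bilinForm_comm _ (Pi.single s 1)]
    ring

theorem apply_simple_plane (a b : B) (x y : ℝ) :
    ρ (cs.simple a) (x • Pi.single a 1 + y • Pi.single b 1) =
      (2 * Real.cos (π / M a b) * y - x) • Pi.single a 1 + y • Pi.single b 1 := by
  simp only [hρ.apply_simple, map_add, map_smul, smul_eq_mul, M.bilinForm_single_self,
    M.bilinForm_single_single]
  module

theorem apply_wordProd_alternatingWord {a b : B} (hab : a ≠ b) (k : ℕ) :
    ρ (cs.wordProd (alternatingWord a b k)) (Pi.single a 1) =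
      (if Even k then dihedralCoeff (M a b) (k + 1) else dihedralCoeff (M a b) k) •
          Pi.single a 1 +
        (if Even k then dihedralCoeff (M a b) k else dihedralCoeff (M a b) (k + 1)) •
          Pi.single b 1 := by
  induction k with
  | zero =>
    simp [alternatingWord, dihedralCoeff_one (M.off_diagonal a b hab), dihedralCoeff_zero]
  | succ k ih =>
    rw [alternatingWord_succ', wordProd_cons, map_mul, LinearEquiv.mul_apply, ih]
    by_cases hk : Even k
    · have hk' : ¬ Even (k + 1) := by simpa [Nat.even_add_one] using hk
      simp only [hk, hk', if_true, if_false]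
      rw [add_comm, hρ.apply_simple_plane b a, M.symmetric, ← dihedralCoeff_add_two,
        add_comm]
    · have hk' : Even (k + 1) := Nat.even_add_one.mpr hk
      simp only [hk, hk', if_true, if_false]
      rw [hρ.apply_simple_plane a b, ← dihedralCoeff_add_two]

/-- Write `w = v · (… s_t s_i s_t)` with `v` minimal in `w W_{i,t}`; the dihedral computation
gives `σ(…) α_i` nonnegative coefficients on `α_i, α_t`, and `σ(v)` keeps `α_i, α_t` nonnegative. -/
theorem zero_le_apply_single {w : W} {i : B} (hwi : ¬ cs.IsRightDescent w i) :
    0 ≤ ρ w (Pi.single i 1) := by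
  induction hn : cs.length w using Nat.strong_induction_on generalizing w i with
  | _ n ih =>
  rcases eq_or_ne w 1 with rfl | hw
  · simp
  obtain ⟨t, hwt⟩ := cs.exists_rightDescent_of_ne_one hw
  have hit : i ≠ t := by rintro rfl; exact hwi hwt
  obtain ⟨v, k, hk, rfl, hlen, hvi, hvt⟩ :=
    cs.exists_eq_mul_wordProd_alternatingWord hwt hwi
  have hred : cs.IsReduced (alternatingWord t i (k + 1)) := by
    have hmul := cs.not_isRightDescent_iff.mp hwi
    rw [mul_assoc, ← wordProd_concat, ← alternatingWord_succ] at hmul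
    have := cs.length_mul_le v (cs.wordProd (alternatingWord t i (k + 1)))
    have := cs.length_wordProd_le (alternatingWord t i (k + 1))
    simp only [IsReduced, length_alternatingWord] at *
    omega
  have hM : M i t = 0 ∨ k + 1 ≤ M i t := by
    simpa [M.symmetric t i] using cs.eq_zero_or_le_of_isReduced_alternatingWord hred
  have hcoeff : ∀ j ≤ k + 1, 0 ≤ dihedralCoeff (M i t) j := fun j hj =>
    dihedralCoeff_nonneg (by omega)
  have hvi' := ih _ (by omega) hvi rfl
  have hvt' := ih _ (by omega) hvt rfl
  rw [map_mul, LinearEquiv.mul_apply, hρ.apply_wordProd_alternatingWord hit, map_add, map_smul,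
    map_smul]
  refine add_nonneg (smul_nonneg ?_ hvi') (smul_nonneg ?_ hvt') <;>
    split_ifs <;> exact hcoeff _ (by omega)

end IsGeometricRepresentation

section Roots

variable {β : B → ℝ}

theorem IsRoot.neg (hβ : IsRoot ρ β) : IsRoot ρ (-β) := by
  obtain ⟨w, i, rfl⟩ := hβ
  exact ⟨w * cs.simple i, i, by simp [hρ.apply_simple_single]⟩

theorem IsRoot.bilinForm_self (hβ : IsRoot ρ β) : M.bilinForm β β = 1 := by
  obtain ⟨w, i, rfl⟩ := hβ
  rw [hρ.bilinForm_apply_apply, M.bilinForm_single_self]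

theorem IsRoot.ne_zero (hβ : IsRoot ρ β) : β ≠ 0 := by
  rintro rfl
  simpa using hβ.bilinForm_self hρ

theorem IsRoot.nonneg_or_nonpos (hβ : IsRoot ρ β) : 0 ≤ β ∨ β ≤ 0 := by
  obtain ⟨w, i, rfl⟩ := hβ
  by_cases hwi : cs.IsRightDescent w i
  · right
    have h := hρ.zero_le_apply_single (cs.isRightDescent_iff_not_isRightDescent_mul.mp hwi)
    rwa [map_mul, LinearEquiv.mul_apply, hρ.apply_simple_single, map_neg, neg_nonneg] at h
  · exact Or.inl (hρ.zero_le_apply_single hwi)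

theorem IsRoot.eq_or_eq_neg_of_eq_smul {β' : B → ℝ} (hβ : IsRoot ρ β) (hβ' : IsRoot ρ β')
    {r : ℝ} (h : β = r • β') : β = β' ∨ β = -β' := by
  have hr : r * r = 1 := by
    have := hβ.bilinForm_self hρ
    simpa [h, hβ'.bilinForm_self hρ] using this
  rcases mul_self_eq_one_iff.mp hr with rfl | rfl
  · simp [h]
  · simp [h]

theorem IsRoot.dualHyperplane_eq_iff {β β' : B → ℝ} (hβ : IsRoot ρ β) (hβ' : IsRoot ρ β') :
    dualHyperplane β = dualHyperplane β' ↔ β = β' ∨ β = -β' := by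
  refine ⟨fun h => ?_, ?_⟩
  · obtain ⟨r, hr⟩ := exists_eq_smul_of_dualHyperplane_eq h
    exact hβ.eq_or_eq_neg_of_eq_smul hρ hβ' hr.symm
  · rintro (rfl | rfl)
    · rfl
    · exact dualHyperplane_neg β'

theorem injOn_dualHyperplane_inversionSet (g w : W) :
    Set.InjOn (fun β => dualHyperplane (ρ g β)) (inversionSet ρ c w) := by
  intro β ⟨hβ, hpos, _⟩ β' ⟨hβ', hpos', _⟩ h
  rcases ((hβ.apply g).dualHyperplane_eq_iff hρ (hβ'.apply g)).mp h with h | h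
  · simpa using h
  · rw [← map_neg, (ρ g).injective.eq_iff] at h
    rw [h, map_neg] at hpos
    linarith

end Roots

variable (hc : ∀ s, 0 < c (Pi.single s 1)) {β : B → ℝ}
include hc

theorem IsRoot.pos_iff_nonneg (hβ : IsRoot ρ β) : 0 < c β ↔ 0 ≤ β := by
  refine ⟨fun hpos => (hβ.nonneg_or_nonpos hρ).resolve_right fun hle => ?_,
    fun hle => pos_apply_of_nonneg_of_ne_zero hc hle (hβ.ne_zero hρ)⟩
  have := pos_apply_of_nonneg_of_ne_zero hc (neg_nonneg.mpr hle) (neg_ne_zero.mpr (hβ.ne_zero hρ))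
  rw [map_neg] at this
  linarith

theorem IsRoot.map_ne_zero (hβ : IsRoot ρ β) : c β ≠ 0 := by
  intro h0
  rcases hβ.nonneg_or_nonpos hρ with hle | hle
  · exact ((hβ.pos_iff_nonneg hρ hc).mpr hle).ne' h0
  · have := ((hβ.neg hρ).pos_iff_nonneg hρ hc).mpr (neg_nonneg.mpr hle)
    rw [map_neg, h0, neg_zero] at this
    exact this.false

/-- A positive root other than `α_i` has a positive coordinate `t ≠ i`, which `σ_{s_i}` fixes. -/
theorem IsRoot.pos_apply_simple (hβ : IsRoot ρ β) (hpos : 0 < c β) {i : B}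
    (hne : β ≠ Pi.single i 1) : 0 < c (ρ (cs.simple i) β) := by
  have hβ0 := (hβ.pos_iff_nonneg hρ hc).mp hpos
  obtain ⟨t, hti, hβt⟩ : ∃ t, t ≠ i ∧ 0 < β t := by
    by_contra! h
    have hβi : β = β i • Pi.single i 1 := by
      ext t
      rcases eq_or_ne t i with rfl | hti
      · simp
      · simp [hti, le_antisymm (h t hti) (hβ0 t)]
    have hsq : β i * β i = 1 := by
      have := hβ.bilinForm_self hρ
      rw [hβi] at this
      simpa [M.bilinForm_single_self] using this
    have hβi1 : β i = 1 := by nlinarith [show 0 ≤ β i from hβ0 i]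
    exact hne (by rw [hβi, hβi1, one_smul])
  refine ((hβ.apply _).pos_iff_nonneg hρ hc).mpr
    (((hβ.apply _).nonneg_or_nonpos hρ).resolve_right fun hle => ?_)
  have := hle t
  rw [hρ.apply_simple_apply_of_ne _ hti] at this
  exact absurd hβt this.not_gt

theorem IsRoot.neg_apply_simple_iff (hβ : IsRoot ρ β) {i : B} (hne : β ≠ Pi.single i 1)
    (hne' : β ≠ -Pi.single i 1) : c (ρ (cs.simple i) β) < 0 ↔ c β < 0 := by
  rcases (hβ.map_ne_zero hρ hc).lt_or_gt with hneg | hpos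
  · have := (hβ.neg hρ).pos_apply_simple hρ hc (by rw [map_neg]; linarith)
      (fun h => hne' (by rw [← h, neg_neg]))
    rw [map_neg, map_neg] at this
    exact ⟨fun _ => hneg, fun _ => by linarith⟩
  · have := hβ.pos_apply_simple hρ hc hpos hne
    exact ⟨fun h => by linarith, fun h => by linarith⟩

theorem inversionSet_mul_simple {w : W} {i : B} (hwi : ¬ cs.IsRightDescent w i) :
    inversionSet ρ c (w * cs.simple i) = insert (ρ w (Pi.single i 1)) (inversionSet ρ c w) := by
  have hα : 0 < c (ρ w (Pi.single i 1)) :=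
    (IsRoot.pos_iff_nonneg hρ hc ⟨w, i, rfl⟩).mpr (hρ.zero_le_apply_single hwi)
  have hnα : ∀ β, 0 < c β → ρ w⁻¹ β ≠ -Pi.single i 1 := fun β hpos h => by
    have : β = -ρ w (Pi.single i 1) := by rw [← map_neg, ← h]; simp
    rw [this, map_neg] at hpos
    linarith
  ext β
  simp only [inversionSet, Set.mem_insert_iff, Set.mem_ofPred_eq, mul_inv_rev, inv_simple,
    map_mul, LinearEquiv.mul_apply]
  constructor
  · rintro ⟨hβ, hpos, hneg⟩
    by_cases h1 : ρ w⁻¹ β = Pi.single i 1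
    · left
      rw [← h1]
      simp
    · exact Or.inr ⟨hβ, hpos,
        ((hβ.apply w⁻¹).neg_apply_simple_iff hρ hc h1 (hnα β hpos)).mp hneg⟩
  · rintro (rfl | ⟨hβ, hpos, hneg⟩)
    · exact ⟨⟨w, i, rfl⟩, hα, by simp [hρ.apply_simple_single, hc i]⟩
    · have h1 : ρ w⁻¹ β ≠ Pi.single i 1 := fun h => by
        rw [h] at hneg
        linarith [hc i]
      exact ⟨hβ, hpos, ((hβ.apply w⁻¹).neg_apply_simple_iff hρ hc h1 (hnα β hpos)).mpr hneg⟩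

theorem encard_inversionSet (w : W) : (inversionSet ρ c w).encard = cs.length w := by
  induction hn : cs.length w generalizing w with
  | zero => rw [cs.length_eq_zero_iff.mp hn, inversionSet_one]; simp
  | succ n ih =>
    have hw1 : w ≠ 1 := by rintro rfl; simp at hn
    obtain ⟨i, hi⟩ := cs.exists_rightDescent_of_ne_one hw1
    have hlen : cs.length (w * cs.simple i) = n := by
      have := cs.isRightDescent_iff.mp hi
      omega
    have hw : w = w * cs.simple i * cs.simple i := (cs.simple_mul_simple_cancel_right i).symm
    rw [hw, inversionSet_mul_simple hρ hc (cs.isRightDescent_iff_not_isRightDescent_mul.mp hi),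
      Set.encard_insert_of_notMem (apply_single_notMem_inversionSet hc _ _), ih _ hlen]
    rfl

theorem IsRoot.exists_pos_dualHyperplane_eq {β : B → ℝ} (hβ : IsRoot ρ β) :
    ∃ δ, IsRoot ρ δ ∧ 0 < c δ ∧ dualHyperplane β = dualHyperplane δ := by
  rcases (hβ.map_ne_zero hρ hc).lt_or_gt with hneg | hpos
  · exact ⟨-β, hβ.neg hρ, by rw [map_neg]; linarith, (dualHyperplane_neg β).symm⟩
  · exact ⟨β, hβ, hpos, rfl⟩

theorem IsRoot.dualHyperplane_inter_segment_nonempty_iff_lt_zero {δ : B → ℝ} (hδ : IsRoot ρ δ)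
    (hpos : 0 < c δ) {dualAct : W → ((B → ℝ) →ₗ[ℝ] ℝ) → ((B → ℝ) →ₗ[ℝ] ℝ)}
    (hdual : ∀ g f ξ, dualAct g f ξ = f (ρ g⁻¹ ξ)) (x : W) :
    (dualHyperplane δ ∩ segment ℝ (dualAct x c) c).Nonempty ↔ c (ρ x⁻¹ δ) < 0 := by
  rw [dualHyperplane_inter_segment_nonempty_iff, hdual, segment_eq_uIcc, Set.mem_uIcc]
  have hne := (hδ.apply x⁻¹).map_ne_zero hρ hc
  constructor
  · rintro (⟨hle, -⟩ | ⟨hle, -⟩)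
    · exact lt_of_le_of_ne hle hne
    · exact absurd hle hpos.not_ge
  · exact fun hlt => Or.inl ⟨hlt.le, hpos.le⟩

theorem IsRoot.dualHyperplane_mem_image_inversionSet_iff {δ : B → ℝ} (hδ : IsRoot ρ δ)
    (g h : W) :
    dualHyperplane δ ∈ (fun β => dualHyperplane (ρ g β)) '' inversionSet ρ c (g⁻¹ * h) ↔
      Xor (c (ρ g⁻¹ δ) < 0) (c (ρ h⁻¹ δ) < 0) := by
  have hγ : IsRoot ρ (ρ g⁻¹ δ) := hδ.apply g⁻¹
  have hinv : ∀ β, ρ (g⁻¹ * h)⁻¹ β = ρ h⁻¹ (ρ g β) := by simp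
  have hhδ := (hδ.apply h⁻¹).map_ne_zero hρ hc
  constructor
  · rintro ⟨β, ⟨hβ, hpos, hneg⟩, hβδ⟩
    rw [hinv] at hneg
    rcases ((hβ.apply g).dualHyperplane_eq_iff hρ hδ).mp hβδ with rfl | hβδ
    · exact Or.inr ⟨hneg, by simpa using hpos.not_gt⟩
    · rw [hβδ, map_neg, map_neg] at hneg
      have : ρ g⁻¹ δ = -β := by rw [← neg_eq_iff_eq_neg.mpr hβδ]; simp
      refine Or.inl ⟨by rw [this, map_neg]; linarith, by linarith⟩
  · rintro (⟨hgδ, hhδ'⟩ | ⟨hhδ', hgδ⟩)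
    · refine ⟨-ρ g⁻¹ δ, ⟨hγ.neg hρ, by rw [map_neg]; linarith, ?_⟩, ?_⟩
      · simpa [hinv] using lt_of_le_of_ne (not_lt.mp hhδ') hhδ.symm
      · simp [dualHyperplane_neg]
    · refine ⟨ρ g⁻¹ δ, ⟨hγ, lt_of_le_of_ne (not_lt.mp hgδ) (hγ.map_ne_zero hρ hc).symm, ?_⟩, ?_⟩
      · simpa [hinv] using hhδ'
      · simp

end CoxeterSystem

open CoxeterSystem

theorem stmt_4
    {B : Type*} [Fintype B] [DecidableEq B] {W : Type*} [Group W]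
    {M : CoxeterMatrix B} (cs : CoxeterSystem M W)
    -- the geometric representation `σ : W →* GL(V)`, `V = B → ℝ`,
    -- with `σ_s ξ = ξ - 2 B(αs, ξ) αs` on the simple reflections
    (ρ : W →* ((B → ℝ) ≃ₗ[ℝ] (B → ℝ)))
    (hρ : ∀ (s : B) (ξ : B → ℝ),
      ρ (cs.simple s) ξ = ξ - (2 * coxForm M (Pi.single s 1) ξ) • (Pi.single s (1:ℝ) : B → ℝ))
    -- the dual (adjoint) action on `V* = V →ₗ[ℝ] ℝ`: `(g • f)(ξ) = f (σ(g⁻¹) ξ)`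
    (dualAct : W → ((B → ℝ) →ₗ[ℝ] ℝ) → ((B → ℝ) →ₗ[ℝ] ℝ))
    (hdual : ∀ (g : W) (f : (B → ℝ) →ₗ[ℝ] ℝ) (ξ : B → ℝ),
      dualAct g f ξ = f ((ρ g⁻¹) ξ))
    -- the hyperplanes `Z_s = {f ∈ V* : f(αs) = 0}` and the family `H = ⋃_{g,s} g Z_s`
    (Zs : B → Set ((B → ℝ) →ₗ[ℝ] ℝ))
    (hZs : ∀ s, Zs s = {f | f (Pi.single s 1) = 0})
    (H : Set (Set ((B → ℝ) →ₗ[ℝ] ℝ)))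
    (hH : H = {Z | ∃ (g : W) (s : B), Z = dualAct g '' Zs s})
    -- a point `c` of the open fundamental chamber `C = ⋂_s {f : f(αs) > 0}`
    (c : (B → ℝ) →ₗ[ℝ] ℝ) (hc : ∀ s : B, 0 < c (Pi.single s 1))
    -- χ_g : the characteristic function of N^g = {Z ∈ H : [g·c, c] ∩ Z ≠ ∅}
    (χ : W → H → ℝ)
    (hχ : ∀ (g : W) (Z : H),
      (((Z : Set ((B → ℝ) →ₗ[ℝ] ℝ)) ∩ segment ℝ (dualAct g c) c).Nonempty → χ g Z = 1) ∧
      (¬ ((Z : Set ((B → ℝ) →ₗ[ℝ] ℝ)) ∩ segment ℝ (dualAct g c) c).Nonempty → χ g Z = 0))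
    (g h : W) :
    (cs.length (g⁻¹ * h) : ℝ) = ∑' Z : H, |χ h Z - χ g Z| ^ 2 := by
  have hρ' : cs.IsGeometricRepresentation ρ := hρ
  have hZs' : ∀ u s, dualAct u '' Zs s = dualHyperplane (ρ u (Pi.single s 1)) := fun u s => by
    rw [hZs, ← image_dualHyperplane hdual]
    rfl
  set T := inversionSet ρ c (g⁻¹ * h)
  have hTH : ∀ β ∈ T, dualHyperplane (ρ g β) ∈ H := by
    rintro β ⟨⟨u, s, rfl⟩, -⟩
    exact hH ▸ ⟨g * u, s, by simp [hZs']⟩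
  let φ : T → H := fun β => ⟨_, hTH β β.2⟩
  have hφ : φ.Injective := fun β β' hββ' => Subtype.ext <|
    injOn_dualHyperplane_inversionSet hρ' g _ β.2 β'.2 (congrArg Subtype.val hββ')
  have hsummand : ∀ Z : H, |χ h Z - χ g Z| ^ 2 = (Set.range φ).indicator 1 Z := by
    rintro ⟨Z, hZ⟩
    obtain ⟨u, s, rfl⟩ := hH ▸ hZ
    obtain ⟨δ, hδ, hpos, hδZ⟩ := IsRoot.exists_pos_dualHyperplane_eq hρ' hc ⟨u, s, rfl⟩
    rw [← hZs'] at hδZ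
    have hχδ : ∀ x, χ x ⟨_, hZ⟩ = if c (ρ x⁻¹ δ) < 0 then 1 else 0 := fun x => by
      have hsep := hδ.dualHyperplane_inter_segment_nonempty_iff_lt_zero hρ' hc hpos hdual x
      rw [← hδZ] at hsep
      split_ifs with hx
      exacts [(hχ x _).1 (hsep.mpr hx), (hχ x _).2 (mt hsep.mp hx)]
    have hrange : ⟨_, hZ⟩ ∈ Set.range φ ↔ Xor (c (ρ g⁻¹ δ) < 0) (c (ρ h⁻¹ δ) < 0) := by
      rw [← hδ.dualHyperplane_mem_image_inversionSet_iff hρ' hc g h, ← hδZ]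
      simp [φ, T, Subtype.ext_iff]
    classical
    simp only [hχδ, sq_abs_ite_sub_ite, Set.indicator_apply, hrange, Pi.one_apply]
  rw [tsum_congr hsummand, tsum_indicator_range_one hφ, Nat.card_coe_set_eq, Set.ncard_def,
    encard_inversionSet hρ' hc, ENat.toNat_natCast]
end

section
/- (Schoenberg) Let G be a group and ψ : G → ℝ a function with ψ(e) = 0, ψ(g⁻¹) = ψ(g), which is conditionally negative definite. Then for every t > 0 the function g ↦ e^{-t·ψ(g)} is positive definite on G. -/
/-!
Conditional negative definiteness of `ψ`, applied to the points `1, g₁, …, gₙ` with coefficients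
`-∑ cᵢ, c₁, …, cₙ`, makes the matrix `Bᵢⱼ = ψ(gᵢ) + ψ(gⱼ) - ψ(gᵢ⁻¹gⱼ)` positive semidefinite.
By the Schur product theorem the entrywise powers of a positive semidefinite matrix are positive
semidefinite, hence so is its entrywise exponential, a limit of nonnegative combinations of them.
Finally `exp(-tψ(gᵢ⁻¹gⱼ)) = uᵢ exp(tBᵢⱼ) uⱼ` with `uᵢ = exp(-tψ(gᵢ)) > 0`, a congruence by a
diagonal matrix.
-/

open Finset Matrix ComplexOrder Nat

namespace Matrix

variable {n 𝕜 : Type*} [Fintype n] [RCLike 𝕜]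

theorem posSemidef_iff_forall_sum_mul_conj_mul_nonneg {M : Matrix n n 𝕜} :
    M.PosSemidef ↔
      M.IsHermitian ∧ ∀ c : n → 𝕜, 0 ≤ ∑ i, ∑ j, c i * starRingEnd 𝕜 (c j) * M i j := by
  have hform (c : n → 𝕜) :
      star (star c) ⬝ᵥ (M *ᵥ star c) = ∑ i, ∑ j, c i * starRingEnd 𝕜 (c j) * M i j := by
    simp [dotProduct, mulVec, Finset.mul_sum, mul_comm, mul_left_comm]
  rw [posSemidef_iff_dotProduct_mulVec]
  refine and_congr_right fun _ => ⟨fun h c => hform c ▸ h (star c), fun h x => ?_⟩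
  simpa only [← hform, star_star] using h (star x)

theorem isClosed_setOf_posSemidef : IsClosed {M : Matrix n n 𝕜 | M.PosSemidef} := by
  simp only [posSemidef_iff_dotProduct_mulVec, Set.ofPred_and, Set.ofPred_forall]
  refine .inter (isClosed_eq (by fun_prop) continuous_id) (isClosed_iInter fun x => ?_)
  exact isClosed_le continuous_const (by fun_prop)

theorem PosSemidef.map_pow {A : Matrix n n 𝕜} (hA : A.PosSemidef) (k : ℕ) :
    (A.map (· ^ k)).PosSemidef := by
  induction k with
  | zero => convert posSemidef_vecMulVec_self_star (fun _ : n => (1 : 𝕜)); ext; simp [vecMulVec]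
  | succ k ih => convert ih.hadamard hA using 1; ext; simp [pow_succ]

theorem PosSemidef.map_exp {A : Matrix n n 𝕜} (hA : A.PosSemidef) :
    (A.map NormedSpace.exp).PosSemidef := by
  have hpartial (N : ℕ) : (∑ k ∈ range N, (k ! : ℝ)⁻¹ • A.map (· ^ k)).PosSemidef :=
    posSemidef_sum _ fun k _ => (hA.map_pow k).smul (by positivity)
  have hlim : Filter.Tendsto (fun N => ∑ k ∈ range N, (k ! : ℝ)⁻¹ • A.map (· ^ k)) .atTop
      (nhds (A.map NormedSpace.exp)) := by
    refine tendsto_pi_nhds.2 fun i => tendsto_pi_nhds.2 fun j => ?_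
    simpa [Matrix.sum_apply] using
      (NormedSpace.exp_series_hasSum_exp' (𝕂 := ℝ) (A i j)).tendsto_sum_nat
  exact isClosed_setOf_posSemidef.mem_of_tendsto hlim (.of_forall hpartial)

end Matrix

/-- Here `≤` is the `ComplexOrder` on `ℂ`, so the quadratic form is also required to be real. -/
def IsConditionallyNegDef {X : Type*} (K : X → X → ℝ) : Prop :=
  ∀ (n : ℕ) (x : Fin n → X) (c : Fin n → ℂ), ∑ i, c i = 0 →
    ∑ i, ∑ j, c i * starRingEnd ℂ (c j) * (K (x i) (x j) : ℂ) ≤ 0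

namespace IsConditionallyNegDef

variable {X : Type*} {K : X → X → ℝ} {x₀ : X}

theorem posSemidef_of_basepoint (hK : IsConditionallyNegDef K) (hsymm : ∀ x y, K x y = K y x)
    (h₀ : K x₀ x₀ = 0) {n : ℕ} (x : Fin n → X) :
    (of fun i j => ((K (x i) x₀ + K x₀ (x j) - K (x i) (x j) : ℝ) : ℂ)).PosSemidef := by
  refine posSemidef_iff_forall_sum_mul_conj_mul_nonneg.2 ⟨.ext fun i j => ?_, fun c => ?_⟩
  · simp [hsymm, add_comm]
  set s := ∑ i, c i
  have hcons := hK (n + 1) (Fin.cons x₀ x) (Fin.cons (-s) c) (by simp [Fin.sum_cons, s])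
  simp only [Fin.sum_univ_succ, Fin.cons_zero, Fin.cons_succ, h₀] at hcons
  refine neg_nonpos.1 (le_of_eq_of_le ?_ hcons)
  simp only [s, map_sum, map_neg, of_apply, Complex.ofReal_zero, mul_zero, zero_add,
    Complex.ofReal_sub, Complex.ofReal_add, mul_add, mul_sub, Finset.sum_add_distrib,
    Finset.sum_sub_distrib, Finset.sum_mul, Finset.mul_sum, neg_mul, mul_neg,
    Finset.sum_neg_distrib, neg_neg]
  rw [Finset.sum_comm (f := fun j i => c i * starRingEnd ℂ (c j) * (K x₀ (x j) : ℂ))]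
  ring

theorem posSemidef_exp_neg_mul (hK : IsConditionallyNegDef K) (hsymm : ∀ x y, K x y = K y x)
    (h₀ : K x₀ x₀ = 0) {t : ℝ} (ht : 0 ≤ t) {n : ℕ} (x : Fin n → X) :
    (of fun i j => (Real.exp (-t * K (x i) (x j)) : ℂ)).PosSemidef := by
  set D : Matrix (Fin n) (Fin n) ℂ := diagonal fun i => (Real.exp (-t * K (x i) x₀) : ℂ)
  have hconj :=
    ((hK.posSemidef_of_basepoint hsymm h₀ x).smul ht).map_exp.conjTranspose_mul_mul_same D
  have hfactor : Dᴴ * (t • of fun i j => ((K (x i) x₀ + K x₀ (x j) - K (x i) (x j) : ℝ) : ℂ)).map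
      NormedSpace.exp * D = of fun i j => (Real.exp (-t * K (x i) (x j)) : ℂ) := by
    ext i j
    simp only [D, neg_mul, Complex.ofReal_exp, Complex.ofReal_neg, Complex.ofReal_mul,
      diagonal_conjTranspose, hsymm x₀, Complex.ofReal_sub, Complex.ofReal_add, smul_of,
      ← Complex.exp_eq_exp_ℂ, mul_diagonal, diagonal_mul, Pi.star_apply, RCLike.star_def,
      map_apply, of_apply, Pi.smul_apply, Complex.real_smul]
    rw [← Complex.exp_conj]
    simp only [map_neg, map_mul, Complex.conj_ofReal, ← Complex.exp_add]
    congr 1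
    ring
  rwa [hfactor] at hconj

end IsConditionallyNegDef

/-- Schoenberg's theorem: if `ψ : G → ℝ` vanishes at the identity, is symmetric and
conditionally negative definite, then `g ↦ exp (-t ψ(g))` is positive definite for every
`t > 0`. -/
theorem stmt_6 {G : Type*} [Group G] (ψ : G → ℝ)
    (he : ψ 1 = 0) (hsymm : ∀ g : G, ψ g⁻¹ = ψ g)
    (hcnd : ∀ (n : ℕ) (g : Fin n → G) (c : Fin n → ℂ), ∑ i, c i = 0 →
      (∑ i, ∑ j, c i * (starRingEnd ℂ) (c j) * (ψ ((g i)⁻¹ * g j) : ℂ)).re ≤ 0 ∧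
      (∑ i, ∑ j, c i * (starRingEnd ℂ) (c j) * (ψ ((g i)⁻¹ * g j) : ℂ)).im = 0)
    (t : ℝ) (ht : 0 < t) (n : ℕ) (g : Fin n → G) (c : Fin n → ℂ) :
    0 ≤ (∑ i, ∑ j, c i * (starRingEnd ℂ) (c j) *
          (Real.exp (-t * ψ ((g i)⁻¹ * g j)) : ℂ)).re ∧
    (∑ i, ∑ j, c i * (starRingEnd ℂ) (c j) *
          (Real.exp (-t * ψ ((g i)⁻¹ * g j)) : ℂ)).im = 0 := by
  have hK : IsConditionallyNegDef fun x y : G => ψ (x⁻¹ * y) := fun n g c hc =>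
    Complex.le_def.2 (by simpa using hcnd n g c hc)
  have hK_symm (x y : G) : ψ (x⁻¹ * y) = ψ (y⁻¹ * x) := by
    rw [← hsymm, _root_.mul_inv_rev, inv_inv]
  have hE := hK.posSemidef_exp_neg_mul hK_symm (x₀ := 1) (by simpa using he) ht.le g
  simpa [Complex.nonneg_iff, eq_comm] using
    (posSemidef_iff_forall_sum_mul_conj_mul_nonneg.1 hE).2 c
end
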